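/- arXiv:2009.02716 — 9 statements merged into one kernel-verified Lean document; each statement's English description precedes it below -/
import Mathlib

section
/- In the errorless relay AoI model, for every policy and every time t ≥ 1, the accumulated AoI reduction by updating through time t is bounded by the accumulated AoI reduction by sampling through time t−1: Σ_{τ=1}^{t−1} R_S(τ) ≥ Σ_{τ=1}^{t} R_U(τ). -/
/-- Accumulated AoI reduction by updating through time `t` is bounded by the accumulated
AoI reduction by sampling through time `t−1`. -/
theorem stmt4 (K : ℕ) (S U : ℕ → Finset (Fin K)) (g h : ℕ → Fin K → ℕ)
    (hg1 : ∀ k, g 1 k = 1) (hh1 : ∀ k, h 1 k = 1)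
    (hgS : ∀ t, 1 ≤ t → ∀ k ∈ S t, g (t + 1) k = 1)
    (hgN : ∀ t, 1 ≤ t → ∀ k ∉ S t, g (t + 1) k = g t k + 1)
    (hhU : ∀ t, 1 ≤ t → ∀ k ∈ U t, h (t + 1) k = g t k + 1)
    (hhN : ∀ t, 1 ≤ t → ∀ k ∉ U t, h (t + 1) k = h t k + 1) :
    ∀ t, 1 ≤ t →
      (∑ τ ∈ Finset.Icc 1 t, ∑ k ∈ U τ, ((h τ k : ℤ) - g τ k)) ≤
        ∑ τ ∈ Finset.Icc 1 (t - 1), ∑ k ∈ S τ, (g τ k : ℤ) := by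
  -- g ≤ h always
  have hle : ∀ t, 1 ≤ t → ∀ k, g t k ≤ h t k := by
    intro t ht
    induction t, ht using Nat.le_induction with
    | base => intro k; rw [hg1, hh1]
    | succ n hn ih =>
      intro k
      by_cases hu : k ∈ U n
      · rw [hhU n hn k hu]
        by_cases hs : k ∈ S n
        · rw [hgS n hn k hs]; omega
        · rw [hgN n hn k hs]
      · rw [hhN n hn k hu]
        by_cases hs : k ∈ S n
        · rw [hgS n hn k hs]; omega
        · rw [hgN n hn k hs]; have := ih k; omega
  -- pointwise recurrence for the gap h - g
  have pw : ∀ t, 1 ≤ t → ∀ k : Fin K,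
      ((h (t+1) k : ℤ) - g (t+1) k)
        = ((h t k : ℤ) - g t k)
          - (if k ∈ U t then ((h t k : ℤ) - g t k) else 0)
          + (if k ∈ S t then (g t k : ℤ) else 0) := by
    intro t ht k
    by_cases hu : k ∈ U t <;> by_cases hs : k ∈ S t
    · rw [hhU t ht k hu, hgS t ht k hs]; simp [hu, hs]
    · rw [hhU t ht k hu, hgN t ht k hs]; simp [hu, hs]
    · rw [hhN t ht k hu, hgS t ht k hs]; simp [hu, hs]
    · rw [hhN t ht k hu, hgN t ht k hs]; simp [hu, hs]
  -- key accounting identity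
  have key : ∀ t, 1 ≤ t →
      (∑ τ ∈ Finset.Icc 1 t, ∑ k ∈ U τ, ((h τ k : ℤ) - g τ k))
        + ∑ k : Fin K, ((h (t+1) k : ℤ) - g (t+1) k)
      = ∑ τ ∈ Finset.Icc 1 t, ∑ k ∈ S τ, (g τ k : ℤ) := by
    intro t ht
    induction t, ht using Nat.le_induction with
    | base =>
      rw [Finset.Icc_self, Finset.sum_singleton, Finset.sum_singleton]
      have h2 : ∀ k : Fin K, ((h 2 k : ℤ) - g 2 k) = if k ∈ S 1 then (1 : ℤ) else 0 := by
        intro k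
        have := pw 1 le_rfl k
        rw [hg1, hh1] at this
        simpa using this
      rw [Finset.sum_congr rfl (fun k _ => h2 k)]
      simp [hg1, hh1, Finset.sum_ite_mem]
    | succ n hn ih =>
      rw [Finset.sum_Icc_succ_top (by omega : 1 ≤ n+1),
        Finset.sum_Icc_succ_top (by omega : 1 ≤ n+1)]
      have expand : ∑ k : Fin K, ((h (n+1+1) k : ℤ) - g (n+1+1) k)
          = ∑ k : Fin K, ((h (n+1) k : ℤ) - g (n+1) k)
            - ∑ k ∈ U (n+1), ((h (n+1) k : ℤ) - g (n+1) k)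
            + ∑ k ∈ S (n+1), (g (n+1) k : ℤ) := by
        rw [Finset.sum_congr rfl (fun k _ => pw (n+1) (by omega) k),
          Finset.sum_add_distrib, Finset.sum_sub_distrib,
          Finset.sum_ite_mem, Finset.univ_inter,
          Finset.sum_ite_mem, Finset.univ_inter]
      linarith [ih, expand]
  intro t ht
  obtain ⟨s, rfl⟩ : ∃ s, t = s + 1 := ⟨t - 1, by omega⟩
  have hk := key (s+1) (by omega)
  rw [Finset.sum_Icc_succ_top (by omega : 1 ≤ s+1),
    Finset.sum_Icc_succ_top (by omega : 1 ≤ s+1)] at hk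
  simp only [Nat.add_sub_cancel]
  rw [Finset.sum_Icc_succ_top (by omega : 1 ≤ s+1)]
  have h1 : ∑ k ∈ S (s+1), (g (s+1) k : ℤ)
      ≤ ∑ k : Fin K, ((h (s+1+1) k : ℤ) - g (s+1+1) k) := by
    calc ∑ k ∈ S (s+1), (g (s+1) k : ℤ)
        ≤ ∑ k ∈ S (s+1), ((h (s+1+1) k : ℤ) - g (s+1+1) k) := by
          apply Finset.sum_le_sum
          intro k hks
          have hg2 : g (s+1+1) k = 1 := hgS (s+1) (by omega) k hks
          have hh2 : g (s+1) k + 1 ≤ h (s+1+1) k := by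
            by_cases hu : k ∈ U (s+1)
            · rw [hhU (s+1) (by omega) k hu]
            · rw [hhN (s+1) (by omega) k hu]
              have := hle (s+1) (by omega) k
              omega
          omega
      _ ≤ ∑ k : Fin K, ((h (s+1+1) k : ℤ) - g (s+1+1) k) := by
          apply Finset.sum_le_sum_of_subset_of_nonneg (Finset.subset_univ _)
          intro k _ _
          have := hle (s+1+1) (by omega) k
          omega
  linarith [hk, h1]
end

section
/- In the errorless relay AoI model, for every policy and every time t ≥ 2, the sum of ages at the destinations is bounded below by Σ_{k=1}^K h_k(t) ≥ tK − Σ_{τ=1}^{t−2} R_S(τ), where R_S(τ) = Σ_{k ∈ S(τ)} g_k(τ). -/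
/-- Lower bound on sum destination AoI: `Σ_k h_k(t) ≥ tK − Σ_{τ=1}^{t−2} R_S(τ)` for `t ≥ 2`. -/
theorem stmt5 (K : ℕ) (S U : ℕ → Finset (Fin K)) (g h : ℕ → Fin K → ℕ)
    (hg1 : ∀ k, g 1 k = 1) (hh1 : ∀ k, h 1 k = 1)
    (hgS : ∀ t, 1 ≤ t → ∀ k ∈ S t, g (t + 1) k = 1)
    (hgN : ∀ t, 1 ≤ t → ∀ k ∉ S t, g (t + 1) k = g t k + 1)
    (hhU : ∀ t, 1 ≤ t → ∀ k ∈ U t, h (t + 1) k = g t k + 1)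
    (hhN : ∀ t, 1 ≤ t → ∀ k ∉ U t, h (t + 1) k = h t k + 1) :
    ∀ t : ℕ, 2 ≤ t →
      (t : ℤ) * K - (∑ τ ∈ Finset.Icc 1 (t - 2), ∑ k ∈ S τ, (g τ k : ℤ)) ≤
        ∑ k : Fin K, (h t k : ℤ) := by
  -- per-sensor bound for g
  have gkey : ∀ t : ℕ, 1 ≤ t → ∀ k,
      (t : ℤ) - (∑ τ ∈ Finset.Icc 1 (t - 1), (if k ∈ S τ then (g τ k : ℤ) else 0))
        ≤ g t k := by
    intro t ht
    induction t, ht using Nat.le_induction with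
    | base =>
      intro k
      simp [hg1]
    | succ t ht ih =>
      intro k
      have hsplit : (∑ τ ∈ Finset.Icc 1 (t + 1 - 1), (if k ∈ S τ then (g τ k : ℤ) else 0))
          = (∑ τ ∈ Finset.Icc 1 (t - 1), (if k ∈ S τ then (g τ k : ℤ) else 0))
            + (if k ∈ S t then (g t k : ℤ) else 0) := by
        have h1 : t + 1 - 1 = (t - 1) + 1 := by omega
        rw [h1, Finset.sum_Icc_succ_top (by omega : 1 ≤ (t-1)+1)]
        have h2 : t - 1 + 1 = t := by omega
        rw [h2]
      rw [hsplit]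
      by_cases hk : k ∈ S t
      · rw [hgS t ht k hk]
        have := ih k
        simp only [hk, if_true]
        push_cast
        linarith
      · rw [hgN t ht k hk]
        have := ih k
        simp only [hk, if_false]
        push_cast
        linarith
  -- per-sensor bound for h
  have hkey : ∀ t : ℕ, 1 ≤ t → ∀ k,
      (t : ℤ) - (∑ τ ∈ Finset.Icc 1 (t - 2), (if k ∈ S τ then (g τ k : ℤ) else 0))
        ≤ h t k := by
    intro t ht
    induction t, ht using Nat.le_induction with
    | base =>
      intro k
      simp [hh1]
    | succ t ht ih =>
      intro k
      have h1 : t + 1 - 2 = t - 1 := by omega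
      rw [h1]
      by_cases hk : k ∈ U t
      · rw [hhU t ht k hk]
        have := gkey t ht k
        push_cast
        linarith
      · rw [hhN t ht k hk]
        have := ih k
        have hsub : (∑ τ ∈ Finset.Icc 1 (t - 2), (if k ∈ S τ then (g τ k : ℤ) else 0))
            ≤ (∑ τ ∈ Finset.Icc 1 (t - 1), (if k ∈ S τ then (g τ k : ℤ) else 0)) := by
          apply Finset.sum_le_sum_of_subset_of_nonneg
          · exact Finset.Icc_subset_Icc_right (by omega)
          · intro i _ _
            positivity
        push_cast
        linarith
  intro t ht
  have ht1 : 1 ≤ t := by omega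
  have hsum : ∑ k : Fin K, ((t : ℤ)
      - (∑ τ ∈ Finset.Icc 1 (t - 2), (if k ∈ S τ then (g τ k : ℤ) else 0)))
      ≤ ∑ k : Fin K, (h t k : ℤ) :=
    Finset.sum_le_sum fun k _ => hkey t ht1 k
  calc (t : ℤ) * K - (∑ τ ∈ Finset.Icc 1 (t - 2), ∑ k ∈ S τ, (g τ k : ℤ))
      = ∑ k : Fin K, ((t : ℤ)
        - (∑ τ ∈ Finset.Icc 1 (t - 2), (if k ∈ S τ then (g τ k : ℤ) else 0))) := by
        rw [Finset.sum_sub_distrib, Finset.sum_const, Finset.sum_comm]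
        simp only [Finset.sum_ite_mem, Finset.univ_inter]
        simp [mul_comm]
    _ ≤ ∑ k : Fin K, (h t k : ℤ) := hsum
end

section
/- In the errorless relay AoI model with K sensors and per-slot sampling budget S ≥ 1, there exists a policy (round-robin/greedy sampling) such that for every time t, the sampling AoI reduction equals R_S(t) = min{tS, K}, where R_S(t) = Σ_{k ∈ S(t)} g_k(t). -/
open Finset

lemma aoi_aux_unique (K m m' k N : ℕ)
    (h1 : k + m*K < N) (h2 : N ≤ k + (m+1)*K)
    (h1' : k + m'*K < N) (h2' : N ≤ k + (m'+1)*K) : m = m' := by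
  rcases lt_trichotomy m m' with h|h|h
  · have : (m+1)*K ≤ m'*K := Nat.mul_le_mul_right _ h
    omega
  · exact h
  · have : (m'+1)*K ≤ m*K := Nat.mul_le_mul_right _ h
    omega

lemma aoi_aux_q (K k N : ℕ) (hK : 0 < K) (h : k < N) :
    k + ((N - k - 1)/K)*K < N ∧ N ≤ k + ((N - k - 1)/K + 1)*K := by
  have h1 := Nat.div_add_mod (N - k - 1) K
  have h2 := Nat.mod_lt (N - k - 1) hK
  have hc : ((N-k-1)/K)*K = K*((N-k-1)/K) := Nat.mul_comm _ _
  constructor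
  · omega
  · have : ((N-k-1)/K + 1)*K = ((N-k-1)/K)*K + K := by ring
    omega

lemma aoi_mod_inj (K v₁ v₂ : ℕ) (h : v₁ % K = v₂ % K) (hle : v₁ ≤ v₂)
    (h2 : v₂ < v₁ + K) : v₁ = v₂ := by
  have hd : K ∣ v₂ - v₁ := (Nat.modEq_iff_dvd' hle).mp h
  rcases hd with ⟨c, hc⟩
  cases c with
  | zero => omega
  | succ n =>
    have : K ≤ K * (n+1) := Nat.le_mul_of_pos_right K (Nat.succ_pos n)
    omega

lemma aoi_sum_div (s : ℕ) (hs : 1 ≤ s) (a : ℕ) :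
    ∑ w ∈ Finset.Ico a (a + s), w / s = a := by
  induction a with
  | zero =>
    simp only [Nat.zero_add]
    rw [Finset.sum_congr rfl (fun w hw => Nat.div_eq_of_lt (Finset.mem_Ico.mp hw).2),
      Finset.sum_const, smul_zero]
  | succ n ih =>
    have h1 : ∑ w ∈ Finset.Ico n (n + s + 1), w / s
        = (∑ w ∈ Finset.Ico n (n + s), w / s) + (n + s)/s := by
      rw [Finset.sum_Ico_succ_top (by omega)]
    have h2 : ∑ w ∈ Finset.Ico n (n + s + 1), w / s
        = n / s + ∑ w ∈ Finset.Ico (n+1) (n + s + 1), w / s := by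
      rw [Finset.sum_eq_sum_Ico_succ_bot (by omega)]
    have h3 : (n + s)/s = n/s + 1 := Nat.add_div_right n hs
    have h4 : n + 1 + s = n + s + 1 := by omega
    rw [h4]
    omega

/-- last time sensor `k` was sampled strictly before slot `t+1` in round robin -/
def aoiLast (s K t k : ℕ) : ℕ :=
  if (t-1)*s ≤ k then 0 else (k + (((t-1)*s - k - 1)/K)*K) / s + 1

/-- There exists a (round-robin) sampling policy of budget `s` whose AoI reduction equals
`min{ts, K}` at every time `t`. -/
theorem stmt9 (K s : ℕ) (hs : 1 ≤ s) (hsK : s < K) :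
    ∃ (S : ℕ → Finset (Fin K)) (g : ℕ → Fin K → ℕ),
      (∀ t, 1 ≤ t → (S t).card = s) ∧
      (∀ k, g 1 k = 1) ∧
      (∀ t, 1 ≤ t → ∀ k ∈ S t, g (t + 1) k = 1) ∧
      (∀ t, 1 ≤ t → ∀ k ∉ S t, g (t + 1) k = g t k + 1) ∧
      (∀ t, 1 ≤ t → ∑ k ∈ S t, g t k = min (t * s) K) := by
  have hK : 0 < K := by omega
  set ι : ℕ → Fin K := fun v => (⟨v % K, Nat.mod_lt v hK⟩ : Fin K) with hι
  set S : ℕ → Finset (Fin K) :=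
    fun t => (Finset.Ico ((t-1)*s) ((t-1)*s + s)).image ι with hS
  set g : ℕ → Fin K → ℕ := fun t k => t - aoiLast s K t k.val with hg
  -- basic arithmetic
  have hts : ∀ t : ℕ, 1 ≤ t → (t-1)*s + s = t*s := by
    rintro ⟨_|n⟩ ht
    · omega
    · simp only [Nat.add_sub_cancel]
      ring
  -- membership characterization
  have hmem : ∀ t : ℕ, ∀ k : Fin K,
      (k ∈ S t ↔ ∃ m, (t-1)*s ≤ k.val + m*K ∧ k.val + m*K < (t-1)*s + s) := by
    intro t k
    constructor
    · intro hk
      rw [hS, Finset.mem_image] at hk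
      obtain ⟨v, hv, hvk⟩ := hk
      rw [Finset.mem_Ico] at hv
      refine ⟨v / K, ?_, ?_⟩ <;>
      · have hval : k.val = v % K := by rw [← hvk]
        have := Nat.mod_add_div v K
        have hc : (v/K)*K = K*(v/K) := Nat.mul_comm _ _
        omega
    · rintro ⟨m, h1, h2⟩
      rw [hS, Finset.mem_image]
      refine ⟨k.val + m*K, Finset.mem_Ico.mpr ⟨h1, h2⟩, ?_⟩
      have : (k.val + m*K) % K = k.val := by
        rw [Nat.add_mul_mod_self_right, Nat.mod_eq_of_lt k.isLt]
      rw [hι]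
      exact Fin.ext this
  -- injectivity of ι on windows
  have hinj : ∀ t : ℕ, ∀ v₁ ∈ Finset.Ico ((t-1)*s) ((t-1)*s + s),
      ∀ v₂ ∈ Finset.Ico ((t-1)*s) ((t-1)*s + s), ι v₁ = ι v₂ → v₁ = v₂ := by
    intro t v₁ h₁ v₂ h₂ hE
    rw [Finset.mem_Ico] at h₁ h₂
    have hmod : v₁ % K = v₂ % K := by
      have := congrArg Fin.val hE
      simpa [hι] using this
    rcases le_total v₁ v₂ with h|h
    · exact aoi_mod_inj K v₁ v₂ hmod h (by omega)
    · exact (aoi_mod_inj K v₂ v₁ hmod.symm h (by omega)).symm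
  -- bound on aoiLast
  have hbound : ∀ t k : ℕ, k < K → aoiLast s K t k ≤ t - 1 := by
    intro t k hk
    unfold aoiLast
    split
    · omega
    · rename_i hlt
      have hq := aoi_aux_q K k ((t-1)*s) hK (by omega)
      have : (k + (((t-1)*s - k - 1)/K)*K) / s < t - 1 := by
        rw [Nat.div_lt_iff_lt_mul (by omega)]
        omega
      omega
  refine ⟨S, g, ?_, ?_, ?_, ?_, ?_⟩
  · -- card
    intro t ht
    rw [hS]
    simp only
    rw [Finset.card_image_of_injOn (hinj t), Nat.card_Ico]
    omega
  · -- g 1 k = 1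
    intro k
    simp [hg, aoiLast]
  · -- reset
    intro t ht k hk
    rw [hmem] at hk
    obtain ⟨m, h1, h2⟩ := hk
    rw [hts t ht] at h2
    have hklt : k.val < t*s := by
      have := k.isLt; omega
    rw [hg]
    simp only
    have hL : aoiLast s K (t+1) k.val = t := by
      unfold aoiLast
      simp only [Nat.add_sub_cancel]
      rw [if_neg (by omega)]
      have hq := aoi_aux_q K k.val (t*s) hK hklt
      have hMle : t*s ≤ k.val + (m+1)*K := by
        have h3 : (m+1)*K = m*K + K := by ring
        have h4 : (t-1)*s + s = t*s := hts t ht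
        omega
      have := aoi_aux_unique K ((t*s - k.val - 1)/K) m k.val (t*s) hq.1 hq.2 h2 hMle
      rw [this]
      have hdiv : (k.val + m*K)/s = t - 1 := by
        have hd1 : (k.val + m*K)/s < t := by
          rw [Nat.div_lt_iff_lt_mul (by omega)]
          exact h2
        have hd2 : t-1 ≤ (k.val + m*K)/s := by
          rw [Nat.le_div_iff_mul_le (by omega)]
          exact h1
        omega
      omega
    omega
  · -- increment
    intro t ht k hk
    rw [hmem] at hk
    push_neg at hk
    rw [hg]
    simp only
    have hL : aoiLast s K (t+1) k.val = aoiLast s K t k.val := by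
      unfold aoiLast
      simp only [Nat.add_sub_cancel]
      by_cases hc1 : (t-1)*s ≤ k.val
      · rw [if_pos hc1]
        by_cases hc2 : t*s ≤ k.val
        · rw [if_pos hc2]
        · exfalso
          have := hk 0
          have h4 : (t-1)*s + s = t*s := hts t ht
          omega
      · rw [if_neg hc1, if_neg (by
          have h4 : (t-1)*s + s = t*s := hts t ht
          omega)]
        have hq := aoi_aux_q K k.val ((t-1)*s) hK (by omega)
        have hq' := aoi_aux_q K k.val (t*s) hK (by
          have h4 : (t-1)*s + s = t*s := hts t ht
          omega)
        set q' := (t*s - k.val - 1)/K with hq'def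
        have hlt : k.val + q'*K < (t-1)*s := by
          by_contra hcon
          have := hk q'
          have h4 : (t-1)*s + s = t*s := hts t ht
          omega
        have hge : (t-1)*s ≤ k.val + (q'+1)*K := by
          have h4 : (t-1)*s + s = t*s := hts t ht
          omega
        have := aoi_aux_unique K (((t-1)*s - k.val - 1)/K) q' k.val ((t-1)*s)
          hq.1 hq.2 hlt hge
        rw [this]
    have hb := hbound t k.val k.isLt
    omega
  · -- the sum
    intro t ht
    rw [hS, hg]
    simp only
    rw [Finset.sum_image (hinj t)]
    have h4 : (t-1)*s + s = t*s := hts t ht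
    have key : ∀ v ∈ Finset.Ico ((t-1)*s) ((t-1)*s + s),
        t - aoiLast s K t ((ι v).val) = if v < K then t else t - 1 - (v - K)/s := by
      intro v hv
      rw [Finset.mem_Ico] at hv
      have hval : (ι v).val = v % K := rfl
      rw [hval]
      have hmv := Nat.mod_add_div v K
      have hc : (v/K)*K = K*(v/K) := Nat.mul_comm _ _
      by_cases hvK : v < K
      · rw [if_pos hvK]
        have hm0 : v % K = v := Nat.mod_eq_of_lt hvK
        unfold aoiLast
        rw [hm0, if_pos hv.1]
        omega
      · rw [if_neg hvK]
        have hm1 : 1 ≤ v / K := by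
          rw [Nat.le_div_iff_mul_le hK]; omega
        have hKe : K ≤ K*(v/K) := Nat.le_mul_of_pos_right K hm1
        have hkv : v % K ≤ v - K := by omega
        have hka : v % K < (t-1)*s := by omega
        unfold aoiLast
        rw [if_neg (by omega)]
        have hq := aoi_aux_q K (v % K) ((t-1)*s) hK hka
        have hlt2 : v % K + (v/K - 1)*K < (t-1)*s := by
          have : (v/K - 1)*K = (v/K)*K - K := by
            rw [Nat.sub_one_mul]
          omega
        have hge2 : (t-1)*s ≤ v % K + (v/K - 1 + 1)*K := by
          have : (v/K - 1 + 1) = v/K := by omega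
          rw [this]
          omega
        have hqe := aoi_aux_unique K (((t-1)*s - v % K - 1)/K) (v/K - 1) (v % K)
          ((t-1)*s) hq.1 hq.2 hlt2 hge2
        rw [hqe]
        have hvv : v % K + (v/K - 1)*K = v - K := by
          have : (v/K - 1)*K = (v/K)*K - K := Nat.sub_one_mul _ _
          omega
        rw [hvv]
        have hvb : v - K < (t-1)*s := by omega
        have hdb : (v - K)/s < t - 1 := by
          rw [Nat.div_lt_iff_lt_mul (by omega)]
          exact hvb
        omega
    rw [Finset.sum_congr rfl key]
    -- now case split on position of K
    by_cases hA : (t-1)*s + s ≤ K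
    · have hcard : (t-1)*s + s - (t-1)*s = s := by omega
      rw [Finset.sum_congr rfl (fun v hv => if_pos (by
        rw [Finset.mem_Ico] at hv; omega)), Finset.sum_const, Nat.card_Ico, hcard,
        smul_eq_mul, Nat.min_eq_left (by omega)]
      exact Nat.mul_comm s t
    · by_cases hC : K ≤ (t-1)*s
      · -- all v ≥ K
        rw [Finset.sum_congr rfl (fun v hv => if_neg (by
          rw [Finset.mem_Ico] at hv; omega))]
        have hsplit : ∑ v ∈ Finset.Ico ((t-1)*s) ((t-1)*s + s), (t - 1 - (v - K)/s)
            + ∑ v ∈ Finset.Ico ((t-1)*s) ((t-1)*s + s), (v - K)/s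
            = s * (t-1) := by
          rw [← Finset.sum_add_distrib]
          rw [Finset.sum_congr rfl (fun v hv => ?_), Finset.sum_const, Nat.card_Ico,
            smul_eq_mul]
          · congr 1; omega
          · rw [Finset.mem_Ico] at hv
            have hdb : (v - K)/s ≤ t - 1 := by
              have : (v-K)/s < t - 1 := by
                rw [Nat.div_lt_iff_lt_mul (by omega)]
                omega
              omega
            omega
        have hshift : ∑ v ∈ Finset.Ico ((t-1)*s) ((t-1)*s + s), (v - K)/s
            = (t-1)*s - K := by
          rw [Finset.sum_Ico_eq_sum_range]
          have h5 : (t-1)*s + s - (t-1)*s = s := by omega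
          rw [h5]
          have := aoi_sum_div s hs ((t-1)*s - K)
          rw [Finset.sum_Ico_eq_sum_range] at this
          have h6 : (t-1)*s - K + s - ((t-1)*s - K) = s := by omega
          rw [h6] at this
          rw [← this]
          apply Finset.sum_congr rfl
          intro i hi
          congr 1
          omega
        rw [hshift] at hsplit
        have hmin : min (t*s) K = K := by omega
        have hst : s * (t-1) = (t-1)*s := Nat.mul_comm _ _
        omega
      · -- middle case: (t-1)*s < K < (t-1)*s + s
        push_neg at hC
        rw [← Finset.sum_Ico_consecutive _ (le_of_lt hC) (by omega)]
        have hfirst : ∑ v ∈ Finset.Ico ((t-1)*s) K,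
            (if v < K then t else t - 1 - (v - K)/s) = (K - (t-1)*s) * t := by
          rw [Finset.sum_congr rfl (fun v hv => if_pos (Finset.mem_Ico.mp hv).2),
            Finset.sum_const, Nat.card_Ico, smul_eq_mul]
        have hsecond : ∑ v ∈ Finset.Ico K ((t-1)*s + s),
            (if v < K then t else t - 1 - (v - K)/s) = ((t-1)*s + s - K) * (t-1) := by
          have hterm : ∀ v ∈ Finset.Ico K ((t-1)*s + s),
              (if v < K then t else t - 1 - (v - K)/s) = t - 1 := by
            intro v hv
            rw [Finset.mem_Ico] at hv
            rw [if_neg (by omega)]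
            have : (v - K)/s = 0 := Nat.div_eq_of_lt (by omega)
            omega
          rw [Finset.sum_congr rfl hterm, Finset.sum_const, Nat.card_Ico, smul_eq_mul]
        rw [hfirst, hsecond]
        have hmin : min (t*s) K = K := by omega
        rw [hmin]
        -- arithmetic identity
        zify [hC.le, le_of_lt (show K < (t-1)*s + s by omega), ht]
        have hz : ((t:ℤ)-1)*s = ((t-1 : ℕ) : ℤ) * s := by
          push_cast [Nat.cast_sub ht]
          ring
        push_cast [Nat.cast_sub ht] at *
        nlinarith [hz]
end

section
/- In the errorless relay AoI model with S = U, there exists a policy (greedy sampling and updating) such that for all t, R_S(t) = min{tS, K} and R_U(t) = min{(t−1)U, K}, where R_S(t) = Σ_{k ∈ S(t)} g_k(t) and R_U(t) = Σ_{k ∈ U(t)} (h_k(t) − g_k(t)); in particular this policy satisfies Σ_{τ=1}^{t−1} R_S(τ) = Σ_{τ=1}^{t} R_U(τ) for all t. -/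
/-!
Sample the sensors cyclically, `s` consecutive ones (mod `K`) per slot, and at slot `t + 1` forward
to the monitor exactly the sensors sampled at slot `t`. Then the monitor lags the relay by one slot,
`h_k(t + 1) = g_k(t) + 1`, so `R_U(1) = 0` and `R_U(t + 1) = R_S(t)`, which gives the sum identity.

The sensor at cyclic position `n` is sampled at slot `⌊n/s⌋ + 1`; it was last sampled at position
`n - K`, i.e. at slot `⌊(n + s - K)/s⌋`, or never if `n < K`. Its age is therefore
`⌊n/s⌋ + 1 - ⌊(n + s - K)/s⌋` (truncated subtraction), and Hermite's identity
`∑_{i<s} ⌊(m + i)/s⌋ = m` sums the ages of one slot to `ts - (ts - K)⁺ = min(ts, K)`.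
-/

open Finset
open Fin.NatCast

namespace Nat

theorem sum_range_add_div {s : ℕ} (hs : 0 < s) (m : ℕ) : ∑ i ∈ range s, (m + i) / s = m := by
  induction m with
  | zero => exact sum_eq_zero fun i hi => Nat.div_eq_of_lt (by simpa using hi)
  | succ m ih =>
    have hlast : ∑ i ∈ range (s + 1), (m + i) / s = m + (m / s + 1) := by
      rw [sum_range_succ, ih, Nat.add_div_right m hs]
    have hfirst : ∑ i ∈ range (s + 1), (m + i) / s = ∑ i ∈ range s, (m + 1 + i) / s + m / s := by
      rw [sum_range_succ']
      simp only [add_assoc, add_comm 1, add_zero]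
    omega

theorem sum_range_add_sub_div {s : ℕ} (hs : 0 < s) (m c : ℕ) :
    ∑ i ∈ range s, (m + i - c) / s = m - c := by
  rcases le_or_gt c m with hcm | hmc
  · rw [← sum_range_add_div hs (m - c)]
    exact sum_congr rfl fun i _ => by rw [Nat.sub_add_comm hcm]
  · rw [Nat.sub_eq_zero_of_le hmc.le]
    exact sum_eq_zero fun i hi => Nat.div_eq_of_lt (by simp only [mem_range] at hi; omega)

end Nat

theorem sum_Icc_sub_one_eq_sum_Icc_of_succ {M : Type*} [AddCommMonoid M] {f g : ℕ → M}
    (h₁ : g 1 = 0) (hsucc : ∀ τ, 1 ≤ τ → g (τ + 1) = f τ) (t : ℕ) :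
    ∑ τ ∈ Icc 1 (t - 1), f τ = ∑ τ ∈ Icc 1 t, g τ := by
  cases t with
  | zero => simp
  | succ t =>
    rw [Nat.add_sub_cancel]
    induction t with
    | zero => simp [h₁]
    | succ t ih =>
      rw [sum_Icc_succ_top (by omega), sum_Icc_succ_top (by omega), ih, hsucc (t + 1) (by omega)]

section Ages

variable {α : Type*} [DecidableEq α] (S U : ℕ → Finset α)

/-- `relayAge S t k` is `g_k(t)` and `monitorAge S U t k` is `h_k(t)`; slots start at `1`, and the
value at slot `0` is a placeholder. -/
def relayAge : ℕ → α → ℕ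
  | 0, _ | 1, _ => 1
  | t + 2, k => if k ∈ S (t + 1) then 1 else relayAge (t + 1) k + 1

def monitorAge : ℕ → α → ℕ
  | 0, _ | 1, _ => 1
  | t + 2, k => if k ∈ U (t + 1) then relayAge S (t + 1) k + 1 else monitorAge (t + 1) k + 1

variable {S U} {t : ℕ} {k : α}

theorem relayAge_succ_of_mem (ht : 1 ≤ t) (hk : k ∈ S t) : relayAge S (t + 1) k = 1 := by
  obtain ⟨t, rfl⟩ := Nat.exists_eq_add_of_le' ht
  simp [relayAge, hk]

theorem relayAge_succ_of_notMem (ht : 1 ≤ t) (hk : k ∉ S t) :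
    relayAge S (t + 1) k = relayAge S t k + 1 := by
  obtain ⟨t, rfl⟩ := Nat.exists_eq_add_of_le' ht
  simp [relayAge, hk]

theorem monitorAge_succ_of_mem (ht : 1 ≤ t) (hk : k ∈ U t) :
    monitorAge S U (t + 1) k = relayAge S t k + 1 := by
  obtain ⟨t, rfl⟩ := Nat.exists_eq_add_of_le' ht
  simp [monitorAge, hk]

theorem monitorAge_succ_of_notMem (ht : 1 ≤ t) (hk : k ∉ U t) :
    monitorAge S U (t + 1) k = monitorAge S U t k + 1 := by
  obtain ⟨t, rfl⟩ := Nat.exists_eq_add_of_le' ht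
  simp [monitorAge, hk]

theorem relayAge_eq_add_of_forall_notMem {a b : ℕ} (ha : 1 ≤ a) (hab : a ≤ b)
    (hk : ∀ u ∈ Ico a b, k ∉ S u) : relayAge S b k = relayAge S a k + (b - a) := by
  induction b, hab using Nat.le_induction with
  | base => simp
  | succ b hab ih =>
    rw [relayAge_succ_of_notMem (by omega) (hk b (mem_Ico.mpr ⟨hab, by omega⟩)),
      ih fun u hu => hk u (by simp only [mem_Ico] at hu ⊢; omega)]
    omega

theorem monitorAge_succ_eq_relayAge_add_one (hU : ∀ t, U (t + 1) = S t) (ht : 1 ≤ t) :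
    monitorAge S U (t + 1) k = relayAge S t k + 1 := by
  induction t, ht using Nat.le_induction with
  | base => by_cases hk : k ∈ U 1 <;> simp [monitorAge, relayAge, hk]
  | succ t ht ih =>
    by_cases hk : k ∈ S t
    · rw [monitorAge_succ_of_mem (by omega) (hU t ▸ hk), relayAge_succ_of_mem ht hk]
    · rw [monitorAge_succ_of_notMem (by omega) (hU t ▸ hk), ih, relayAge_succ_of_notMem ht hk]

theorem sum_monitorAge_sub_relayAge_succ (hU : ∀ t, U (t + 1) = S t) (ht : 1 ≤ t) :
    ∑ k ∈ U (t + 1), ((monitorAge S U (t + 1) k : ℤ) - relayAge S (t + 1) k) =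
      ∑ k ∈ S t, (relayAge S t k : ℤ) := by
  rw [hU t]
  refine sum_congr rfl fun k hk => ?_
  rw [monitorAge_succ_eq_relayAge_add_one hU ht, relayAge_succ_of_mem ht hk]
  push_cast
  ring

end Ages

section RoundRobin

variable (K s : ℕ) [NeZero K]

def roundRobin (t : ℕ) : Finset (Fin K) :=
  (Ico ((t - 1) * s) ((t - 1) * s + s)).image fun n : ℕ => (n : Fin K)

variable {K s}

theorem injOn_natCast_Ico {a b : ℕ} (hab : b ≤ a + K) :
    Set.InjOn (fun n : ℕ => (n : Fin K)) (Ico a b) := by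
  intro m hm n hn hmn
  simp only [coe_Ico, Set.mem_Ico] at hm hn
  have hmod : m ≡ n [MOD K] := (CharP.natCast_eq_natCast (Fin K) K).mp hmn
  rcases lt_trichotomy m n with hlt | heq | hgt
  · have := hmod.add_le_of_lt hlt
    omega
  · exact heq
  · have := hmod.symm.add_le_of_lt hgt
    omega

theorem card_roundRobin (hsK : s ≤ K) (t : ℕ) : #(roundRobin K s t) = s := by
  rw [roundRobin, card_image_of_injOn (injOn_natCast_Ico (by omega)), Nat.card_Ico,
    Nat.add_sub_cancel_left]

theorem mem_roundRobin (hs : 0 < s) {t : ℕ} (ht : 1 ≤ t) {k : Fin K} :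
    k ∈ roundRobin K s t ↔ ∃ n, n / s + 1 = t ∧ (n : Fin K) = k := by
  simp only [roundRobin, mem_image, mem_Ico]
  refine exists_congr fun n => and_congr_left fun _ => ?_
  rw [show n / s + 1 = t ↔ n / s = t - 1 by omega, Nat.div_eq_iff hs]
  omega

theorem relayAge_roundRobin (hs : 0 < s) (hsK : s < K) (n : ℕ) :
    relayAge (roundRobin K s) (n / s + 1) n = n / s + 1 - (n + s - K) / s := by
  generalize ha_def : (n + s - K) / s = a
  have ha_le : a ≤ n / s := ha_def ▸ Nat.div_le_div_right (by omega)
  have ha_of_le (hKn : K ≤ n) : a = (n - K) / s + 1 := by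
    rw [← ha_def, show n + s - K = n - K + s by omega, Nat.add_div_right _ hs]
  have hlast (ha : 1 ≤ a) : (n : Fin K) ∈ roundRobin K s a := by
    have hKn : K ≤ n := by
      by_contra! h
      have : (n + s - K) / s = 0 := Nat.div_eq_of_lt (by omega)
      omega
    refine (mem_roundRobin hs ha).mpr ⟨n - K, (ha_of_le hKn).symm, ?_⟩
    refine (CharP.natCast_eq_natCast (Fin K) K).mpr ((Nat.modEq_iff_dvd' (Nat.sub_le n K)).mpr ?_)
    rw [Nat.sub_sub_self hKn]
  have hgap (u : ℕ) (hu : u ∈ Ico (a + 1) (n / s + 1)) : (n : Fin K) ∉ roundRobin K s u := by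
    rw [mem_Ico] at hu
    intro hmem
    obtain ⟨m, rfl, hmn⟩ := (mem_roundRobin hs (by omega)).mp hmem
    have hmod : m ≡ n [MOD K] := (CharP.natCast_eq_natCast (Fin K) K).mp hmn
    have hKm : m + K ≤ n := hmod.add_le_of_lt (Nat.lt_of_div_lt_div (c := s) (by omega))
    have := Nat.div_le_div_right (c := s) (show m ≤ n - K by omega)
    have := ha_of_le (by omega)
    omega
  have hstart : relayAge (roundRobin K s) (a + 1) n = 1 := by
    rcases Nat.eq_zero_or_pos a with rfl | ha
    · rfl
    · exact relayAge_succ_of_mem ha (hlast ha)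
  rw [relayAge_eq_add_of_forall_notMem (by omega) (by omega) hgap, hstart]
  omega

theorem sum_relayAge_roundRobin (hs : 0 < s) (hsK : s < K) {t : ℕ} (ht : 1 ≤ t) :
    ∑ k ∈ roundRobin K s t, relayAge (roundRobin K s) t k = min (t * s) K := by
  obtain ⟨j, rfl⟩ := Nat.exists_eq_add_of_le' ht
  have hage : ∀ n ∈ Ico (j * s) (j * s + s),
      relayAge (roundRobin K s) (j + 1) n = j + 1 - (n + s - K) / s := by
    intro n hn
    obtain rfl : n / s = j := (Nat.div_eq_iff hs).mpr (by simp only [mem_Ico] at hn; omega)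
    exact relayAge_roundRobin hs hsK n
  have hlag : ∑ n ∈ Ico (j * s) (j * s + s), (n + s - K) / s = (j + 1) * s - K := by
    rw [sum_Ico_eq_sum_range, Nat.add_sub_cancel_left, add_one_mul,
      ← Nat.sum_range_add_sub_div hs (j * s + s) K]
    exact sum_congr rfl fun i _ => by rw [add_right_comm (j * s) i s]
  rw [roundRobin, Nat.add_sub_cancel, sum_image (injOn_natCast_Ico (by omega)),
    sum_congr rfl hage, sum_tsub_distrib _ fun n hn =>
      Nat.div_le_of_le_mul (by rw [mul_add_one, mul_comm]; simp only [mem_Ico] at hn; omega),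
    sum_const, Nat.card_Ico, Nat.add_sub_cancel_left, hlag, smul_eq_mul, mul_comm]
  omega

end RoundRobin

/-- There exists a greedy sampling-and-updating policy with `|S(t)| = |U(t)| = s` such that
`R_S(t) = min{ts, K}`, `R_U(t) = min{(t−1)s, K}`, and consequently
`Σ_{τ≤t−1} R_S(τ) = Σ_{τ≤t} R_U(τ)` for all `t`. -/
theorem stmt10 (K s : ℕ) (hs : 1 ≤ s) (hsK : s < K) :
    ∃ (S U : ℕ → Finset (Fin K)) (g h : ℕ → Fin K → ℕ),
      (∀ t, 1 ≤ t → (S t).card = s) ∧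
      (∀ t, 1 ≤ t → (U t).card = s) ∧
      (∀ k, g 1 k = 1) ∧ (∀ k, h 1 k = 1) ∧
      (∀ t, 1 ≤ t → ∀ k ∈ S t, g (t + 1) k = 1) ∧
      (∀ t, 1 ≤ t → ∀ k ∉ S t, g (t + 1) k = g t k + 1) ∧
      (∀ t, 1 ≤ t → ∀ k ∈ U t, h (t + 1) k = g t k + 1) ∧
      (∀ t, 1 ≤ t → ∀ k ∉ U t, h (t + 1) k = h t k + 1) ∧
      (∀ t, 1 ≤ t → (∑ k ∈ S t, (g t k : ℤ)) = (min (t * s) K : ℕ)) ∧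
      (∀ t, 1 ≤ t → (∑ k ∈ U t, ((h t k : ℤ) - g t k)) = (min ((t - 1) * s) K : ℕ)) ∧
      (∀ t, 1 ≤ t →
        (∑ τ ∈ Finset.Icc 1 (t - 1), ∑ k ∈ S τ, (g τ k : ℤ)) =
          ∑ τ ∈ Finset.Icc 1 t, ∑ k ∈ U τ, ((h τ k : ℤ) - g τ k)) := by
  have : NeZero K := ⟨by omega⟩
  set S := roundRobin K s
  set U := fun t => roundRobin K s (t - 1)
  have hU : ∀ t, U (t + 1) = S t := fun _ => rfl
  have RU₁ : ∑ k ∈ U 1, ((monitorAge S U 1 k : ℤ) - relayAge S 1 k) = 0 :=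
    sum_eq_zero fun _ _ => sub_self _
  have RS (t : ℕ) (ht : 1 ≤ t) : ∑ k ∈ S t, (relayAge S t k : ℤ) = (min (t * s) K : ℕ) := by
    exact_mod_cast sum_relayAge_roundRobin hs hsK ht
  have RU (t : ℕ) (ht : 1 ≤ t) :
      ∑ k ∈ U t, ((monitorAge S U t k : ℤ) - relayAge S t k) = (min ((t - 1) * s) K : ℕ) := by
    obtain ⟨u, rfl⟩ := Nat.exists_eq_add_of_le' ht
    rcases Nat.eq_zero_or_pos u with rfl | hu
    · simpa using RU₁
    · rw [sum_monitorAge_sub_relayAge_succ hU hu, RS u hu, Nat.add_sub_cancel]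
  refine ⟨S, U, relayAge S, monitorAge S U, fun t _ => card_roundRobin hsK.le t,
    fun t _ => card_roundRobin hsK.le (t - 1), fun _ => rfl, fun _ => rfl,
    fun _ ht _ => relayAge_succ_of_mem ht, fun _ ht _ => relayAge_succ_of_notMem ht,
    fun _ ht _ => monitorAge_succ_of_mem ht, fun _ ht _ => monitorAge_succ_of_notMem ht, RS, RU,
    fun t _ => sum_Icc_sub_one_eq_sum_Icc_of_succ RU₁
      (fun τ hτ => sum_monitorAge_sub_relayAge_succ hU hτ) t⟩
end

section
/- Sufficiency of the optimality condition: in the errorless relay AoI model, if a policy π* satisfies Σ_{τ=1}^{t} R_U^{π*}(τ) = Σ_{τ=1}^{t−1} R_S^{π*}(τ) for every t, and Σ_{t=1}^{T} Σ_{τ=1}^{t−2} R_S^{π*}(τ) is maximal over all policies, then π* minimizes the time-averaged sum AoI at the destinations (1/T) Σ_{t=1}^{T} Σ_{k=1}^{K} h_k(t) over all policies. -/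
/-- A valid policy in the errorless relay AoI model: sampling sets of size `s`,
updating sets of size `u`, and the standard age evolution. -/
def AoIValid (K s u : ℕ) (S U : ℕ → Finset (Fin K)) (g h : ℕ → Fin K → ℕ) : Prop :=
  (∀ t, 1 ≤ t → (S t).card = s) ∧ (∀ t, 1 ≤ t → (U t).card = u) ∧
  (∀ k, g 1 k = 1) ∧ (∀ k, h 1 k = 1) ∧
  (∀ t, 1 ≤ t → ∀ k ∈ S t, g (t + 1) k = 1) ∧
  (∀ t, 1 ≤ t → ∀ k ∉ S t, g (t + 1) k = g t k + 1) ∧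
  (∀ t, 1 ≤ t → ∀ k ∈ U t, h (t + 1) k = g t k + 1) ∧
  (∀ t, 1 ≤ t → ∀ k ∉ U t, h (t + 1) k = h t k + 1)

namespace AoIaux

variable {K s u : ℕ} {S U : ℕ → Finset (Fin K)} {g h : ℕ → Fin K → ℕ}

noncomputable def RU (U : ℕ → Finset (Fin K)) (g h : ℕ → Fin K → ℕ) (τ : ℕ) : ℤ :=
  ∑ k ∈ U τ, ((h τ k : ℤ) - g τ k)

noncomputable def RS (S : ℕ → Finset (Fin K)) (g : ℕ → Fin K → ℕ) (τ : ℕ) : ℤ :=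
  ∑ k ∈ S τ, (g τ k : ℤ)

lemma sum_split (f : Fin K → ℤ) (A : Finset (Fin K)) :
    (∑ k : Fin K, f k) = (∑ k ∈ A, f k) + ∑ k ∈ Aᶜ, f k := by
  rw [Finset.sum_add_sum_compl]

lemma card_split (A : Finset (Fin K)) : (A.card : ℤ) + (Aᶜ.card : ℤ) = (K : ℤ) := by
  have := Finset.card_add_card_compl A
  simp only [Fintype.card_fin] at this
  exact_mod_cast this

lemma sumh (hv : AoIValid K s u S U g h) :
    ∀ t, 1 ≤ t → (∑ k : Fin K, (h t k : ℤ)) =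
      K * t - ∑ τ ∈ Finset.Icc 1 (t - 1), RU U g h τ := by
  obtain ⟨-, -, hg1, hh1, -, -, hU1, hU2⟩ := hv
  intro t ht
  induction t, ht using Nat.le_induction with
  | base => simp [hh1]
  | succ n hn ih =>
    obtain ⟨m, rfl⟩ : ∃ m, n = m + 1 := ⟨n - 1, by omega⟩
    simp only [Nat.add_sub_cancel] at ih ⊢
    have hsplit := sum_split (fun k => (h (m + 1 + 1) k : ℤ)) (U (m + 1))
    have e1 : ∀ k ∈ U (m + 1), (h (m + 1 + 1) k : ℤ) = (g (m + 1) k : ℤ) + 1 := by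
      intro k hk; rw [hU1 (m + 1) hn k hk]; push_cast; ring
    have e2 : ∀ k ∈ (U (m + 1))ᶜ, (h (m + 1 + 1) k : ℤ) = (h (m + 1) k : ℤ) + 1 := by
      intro k hk; rw [hU2 (m + 1) hn k (Finset.mem_compl.mp hk)]; push_cast; ring
    rw [Finset.sum_congr rfl e1, Finset.sum_congr rfl e2] at hsplit
    have hfull := sum_split (fun k => (h (m + 1) k : ℤ)) (U (m + 1))
    rw [Finset.sum_Icc_succ_top (by omega : 1 ≤ m + 1)]
    have hRU : RU U g h (m + 1) =
        (∑ k ∈ U (m+1), (h (m+1) k : ℤ)) - ∑ k ∈ U (m+1), (g (m+1) k : ℤ) := by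
      rw [RU, Finset.sum_sub_distrib]
    have hcard := card_split (U (m+1))
    have hring : (K : ℤ) * ((m:ℤ) + 1 + 1) = (K:ℤ) * ((m:ℤ) + 1) + K := by ring
    simp only [Finset.sum_add_distrib, Finset.sum_const, nsmul_eq_mul, mul_one] at hsplit
    push_cast at *
    linarith

lemma sumg (hv : AoIValid K s u S U g h) :
    ∀ t, 1 ≤ t → (∑ k : Fin K, (g t k : ℤ)) =
      K * t - ∑ τ ∈ Finset.Icc 1 (t - 1), RS S g τ := by
  obtain ⟨-, -, hg1, hh1, hS1, hS2, -, -⟩ := hv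
  intro t ht
  induction t, ht using Nat.le_induction with
  | base => simp [hg1]
  | succ n hn ih =>
    obtain ⟨m, rfl⟩ : ∃ m, n = m + 1 := ⟨n - 1, by omega⟩
    simp only [Nat.add_sub_cancel] at ih ⊢
    have hsplit := sum_split (fun k => (g (m + 1 + 1) k : ℤ)) (S (m + 1))
    have e1 : ∀ k ∈ S (m + 1), (g (m + 1 + 1) k : ℤ) = 1 := by
      intro k hk; rw [hS1 (m + 1) hn k hk]; simp
    have e2 : ∀ k ∈ (S (m + 1))ᶜ, (g (m + 1 + 1) k : ℤ) = (g (m + 1) k : ℤ) + 1 := by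
      intro k hk; rw [hS2 (m + 1) hn k (Finset.mem_compl.mp hk)]; push_cast; ring
    rw [Finset.sum_congr rfl e1, Finset.sum_congr rfl e2] at hsplit
    have hfull := sum_split (fun k => (g (m + 1) k : ℤ)) (S (m + 1))
    rw [Finset.sum_Icc_succ_top (by omega : 1 ≤ m + 1)]
    have hRS : RS S g (m + 1) = ∑ k ∈ S (m+1), (g (m+1) k : ℤ) := rfl
    have hcard := card_split (S (m+1))
    have hring : (K : ℤ) * ((m:ℤ) + 1 + 1) = (K:ℤ) * ((m:ℤ) + 1) + K := by ring
    simp only [Finset.sum_add_distrib, Finset.sum_const, nsmul_eq_mul, mul_one] at hsplit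
    push_cast at *
    linarith

lemma hge (hv : AoIValid K s u S U g h) :
    ∀ t, 1 ≤ t → ∀ k, g t k ≤ h t k := by
  obtain ⟨-, -, hg1, hh1, hS1, hS2, hU1, hU2⟩ := hv
  intro t ht
  induction t, ht using Nat.le_induction with
  | base => intro k; rw [hg1, hh1]
  | succ n hn ih =>
    intro k
    have hgk : g (n+1) k ≤ g n k + 1 := by
      by_cases hk : k ∈ S n
      · rw [hS1 n hn k hk]; omega
      · rw [hS2 n hn k hk]
    by_cases hk : k ∈ U n
    · rw [hU1 n hn k hk]; omega
    · rw [hU2 n hn k hk]; have := ih k; omega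

lemma cumRU (hv : AoIValid K s u S U g h) :
    ∀ t, 1 ≤ t → (∑ τ ∈ Finset.Icc 1 t, RU U g h τ) ≤
      ∑ τ ∈ Finset.Icc 1 (t - 1), RS S g τ := by
  have hD : ∀ t, 1 ≤ t → (∑ k : Fin K, ((h t k : ℤ) - g t k)) =
      (∑ τ ∈ Finset.Icc 1 (t-1), RS S g τ) - ∑ τ ∈ Finset.Icc 1 (t-1), RU U g h τ := by
    intro t ht
    rw [Finset.sum_sub_distrib, sumh hv t ht, sumg hv t ht]; ring
  have hRUle : ∀ t, 1 ≤ t → RU U g h t ≤ ∑ k : Fin K, ((h t k : ℤ) - g t k) := by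
    intro t ht
    apply Finset.sum_le_sum_of_subset_of_nonneg (Finset.subset_univ _)
    intro k _ _
    have := hge hv t ht k
    omega
  intro t ht
  induction t, ht using Nat.le_induction with
  | base =>
    obtain ⟨-, -, hg1, hh1, -⟩ := hv
    simp [RU, hg1, hh1]
  | succ n hn ih =>
    rw [Finset.sum_Icc_succ_top (by omega : 1 ≤ n + 1)]
    have h2 := hRUle (n+1) (by omega)
    rw [hD (n+1) (by omega)] at h2
    simp only [Nat.add_sub_cancel] at h2 ⊢
    omega

end AoIaux

namespace AoIaux

lemma perT (hv : AoIValid K s u S U g h) :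
    ∀ t, 1 ≤ t → (∑ τ ∈ Finset.Icc 1 (t - 1), RU U g h τ) ≤
      ∑ τ ∈ Finset.Icc 1 (t - 2), RS S g τ := by
  intro t ht
  rcases Nat.lt_or_ge t 2 with h2 | h2
  · have : t = 1 := by omega
    subst this
    simp
  · obtain ⟨m, rfl⟩ : ∃ m, t = m + 2 := ⟨t - 2, by omega⟩
    have := cumRU hv (m + 1) (by omega)
    simpa using this

end AoIaux

/-- Sufficiency of the optimality condition: a policy whose updating reduction exactly tracks
its sampling reduction, and which maximizes the accumulated sampling reduction, minimizes the
time-averaged sum AoI at the destinations. -/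
theorem stmt11 (K s u T : ℕ) (hT : 1 ≤ T)
    (S' U' : ℕ → Finset (Fin K)) (g' h' : ℕ → Fin K → ℕ)
    (hvalid : AoIValid K s u S' U' g' h')
    (hbalance : ∀ t, 1 ≤ t →
      (∑ τ ∈ Finset.Icc 1 t, ∑ k ∈ U' τ, ((h' τ k : ℤ) - g' τ k)) =
        ∑ τ ∈ Finset.Icc 1 (t - 1), ∑ k ∈ S' τ, (g' τ k : ℤ))
    (hmax : ∀ S U g h, AoIValid K s u S U g h →
      (∑ t ∈ Finset.Icc 1 T, ∑ τ ∈ Finset.Icc 1 (t - 2), ∑ k ∈ S τ, (g τ k : ℤ)) ≤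
        ∑ t ∈ Finset.Icc 1 T, ∑ τ ∈ Finset.Icc 1 (t - 2), ∑ k ∈ S' τ, (g' τ k : ℤ)) :
    ∀ S U g h, AoIValid K s u S U g h →
      (∑ t ∈ Finset.Icc 1 T, ∑ k : Fin K, (h' t k : ℝ)) / T ≤
        (∑ t ∈ Finset.Icc 1 T, ∑ k : Fin K, (h t k : ℝ)) / T := by
  intro S U g h hv
  open AoIaux in
  have key : (∑ t ∈ Finset.Icc 1 T, ∑ k : Fin K, (h' t k : ℤ)) ≤
      ∑ t ∈ Finset.Icc 1 T, ∑ k : Fin K, (h t k : ℤ) := by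
    -- balance for π' : per-t equality
    have hbal' : ∀ t, 1 ≤ t → (∑ τ ∈ Finset.Icc 1 (t - 1), RU U' g' h' τ) =
        ∑ τ ∈ Finset.Icc 1 (t - 2), RS S' g' τ := by
      intro t ht
      rcases Nat.lt_or_ge t 2 with h2 | h2
      · have : t = 1 := by omega
        subst this; simp
      · obtain ⟨m, rfl⟩ : ∃ m, t = m + 2 := ⟨t - 2, by omega⟩
        have := hbalance (m + 1) (by omega)
        simpa [RU, RS] using this
    have e1 : (∑ t ∈ Finset.Icc 1 T, ∑ k : Fin K, (h' t k : ℤ)) =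
        ∑ t ∈ Finset.Icc 1 T, ((K : ℤ) * t - ∑ τ ∈ Finset.Icc 1 (t - 2), RS S' g' τ) := by
      refine Finset.sum_congr rfl fun t ht => ?_
      have ht1 : 1 ≤ t := (Finset.mem_Icc.mp ht).1
      rw [sumh hvalid t ht1, hbal' t ht1]
    have e2 : ∀ t ∈ Finset.Icc 1 T,
        ((K : ℤ) * t - ∑ τ ∈ Finset.Icc 1 (t - 2), RS S g τ) ≤
          ∑ k : Fin K, (h t k : ℤ) := by
      intro t ht
      have ht1 : 1 ≤ t := (Finset.mem_Icc.mp ht).1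
      rw [sumh hv t ht1]
      have := perT hv t ht1
      omega
    rw [e1]
    calc ∑ t ∈ Finset.Icc 1 T, ((K : ℤ) * t - ∑ τ ∈ Finset.Icc 1 (t - 2), RS S' g' τ)
        ≤ ∑ t ∈ Finset.Icc 1 T, ((K : ℤ) * t - ∑ τ ∈ Finset.Icc 1 (t - 2), RS S g τ) := by
          simp only [Finset.sum_sub_distrib]
          have := hmax S U g h hv
          simp only [RS]
          omega
      _ ≤ ∑ t ∈ Finset.Icc 1 T, ∑ k : Fin K, (h t k : ℤ) := Finset.sum_le_sum e2
  have keyR : (∑ t ∈ Finset.Icc 1 T, ∑ k : Fin K, (h' t k : ℝ)) ≤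
      ∑ t ∈ Finset.Icc 1 T, ∑ k : Fin K, (h t k : ℝ) := by exact_mod_cast key
  have hTpos : (0 : ℝ) < T := by exact_mod_cast hT
  exact div_le_div_of_nonneg_right keyR hTpos.le
end

section
/- Minimum sum relay AoI in closed form: in the errorless relay AoI model with sampling budget S < K and t' = ⌈K/S⌉, for every policy and every t ≥ t' + 1, Σ_{k=1}^K g_k(t) ≥ t'K − t'(t'−1)S/2, and this bound is achieved by round-robin greedy sampling; in particular the minimum sum relay AoI is constant (independent of t) for t ≥ t' + 1. -/
/-- Age of sensor `k` at time `t` under the round-robin pointer schedule. -/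
def ggA (K s t k : ℕ) : ℕ :=
  if k < (t - 1) * s then t - 1 - (k + ((t - 1) * s - 1 - k) / K * K) / s else t

/-- Round-robin sampled set at slot `t`. -/
def SSA (K s t : ℕ) : Finset (Fin K) :=
  Finset.univ.filter (fun k => ∃ v ∈ Finset.Ico ((t - 1) * s) (t * s), v % K = k.val)

lemma mem_SSA {K s t : ℕ} (k : Fin K) :
    k ∈ SSA K s t ↔ ∃ v, (t - 1) * s ≤ v ∧ v < t * s ∧ v % K = k.val := by
  simp [SSA, Finset.mem_filter, Finset.mem_Ico, and_assoc]

lemma lt_div_succ_mul (a s : ℕ) (hs : 0 < s) : a < (a / s + 1) * s := by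
  have h1 := Nat.div_add_mod a s
  have h2 := Nat.mod_lt a hs
  have h3 : (a / s + 1) * s = s * (a / s) + s := by ring
  omega

lemma card_SSA {K s t : ℕ} (hK : 0 < K) (hsK : s ≤ K) (ht : 1 ≤ t) :
    (SSA K s t).card = s := by
  have himg : SSA K s t =
      (Finset.Ico ((t - 1) * s) (t * s)).image
        (fun v => (⟨v % K, Nat.mod_lt v hK⟩ : Fin K)) := by
    ext k
    simp [mem_SSA, Finset.mem_image, Finset.mem_Ico, Fin.ext_iff, and_assoc]
  rw [himg, Finset.card_image_of_injOn, Nat.card_Ico]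
  · obtain ⟨u, rfl⟩ : ∃ u, t = u + 1 := ⟨t - 1, by omega⟩
    have h1 : (u + 1) * s = u * s + s := by ring
    have h2 : (u + 1 - 1) * s = u * s := by simp
    omega
  · intro v hv v' hv' h
    simp only [Finset.coe_Ico, Set.mem_Ico] at hv hv'
    have hts : t * s = (t - 1) * s + s := by
      obtain ⟨u, rfl⟩ : ∃ u, t = u + 1 := ⟨t - 1, by omega⟩
      simp [Nat.add_mul]
    have hmod : v % K = v' % K := by
      simpa [Fin.ext_iff] using h
    have hdvd : (K : ℤ) ∣ (v' : ℤ) - (v : ℤ) := Nat.modEq_iff_dvd.mp hmod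
    have h0 : ((v' : ℤ) - (v : ℤ)) = 0 := by
      refine Int.eq_zero_of_abs_lt_dvd hdvd ?_
      rw [abs_lt]
      constructor <;> push_cast <;> omega
    omega

lemma ggA_one (K s k : ℕ) : ggA K s 1 k = 1 := by simp [ggA]

lemma ggA_refresh {K s : ℕ} (hK : 0 < K) (hs : 0 < s) (hsK : s ≤ K)
    {t k v : ℕ} (ht : 1 ≤ t) (hk : k < K)
    (hv1 : (t - 1) * s ≤ v) (hv2 : v < t * s) (hv3 : v % K = k) :
    ggA K s (t + 1) k = 1 := by
  have hkv : k ≤ v := by rw [← hv3]; exact Nat.mod_le v K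
  have hkts : k < t * s := lt_of_le_of_lt hkv hv2
  have hts1 : 1 ≤ t * s := by
    have : 1 * 1 ≤ t * s := Nat.mul_le_mul ht hs
    omega
  simp only [ggA, Nat.add_sub_cancel]
  rw [if_pos hkts]
  set j := (t * s - 1 - k) / K with hj
  have hub : j * K ≤ t * s - 1 - k := Nat.div_mul_le_self _ _
  set m := v / K with hm
  have hmv : K * m + k = v := by rw [← hv3]; exact Nat.div_add_mod v K
  have hmle : m ≤ j := by
    rw [hj]
    rw [Nat.le_div_iff_mul_le hK]
    have : m * K = K * m := Nat.mul_comm _ _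
    omega
  have hmj : m * K ≤ j * K := Nat.mul_le_mul_right K hmle
  have hlb : (t - 1) * s ≤ k + j * K := by
    have : m * K = K * m := Nat.mul_comm _ _
    omega
  have hdiv : (k + j * K) / s = t - 1 := by
    apply Nat.div_eq_of_lt_le hlb
    have : t - 1 + 1 = t := by omega
    rw [this]
    omega
  rw [hdiv]
  omega

lemma ggA_step {K s : ℕ} (hK : 0 < K) (hs : 0 < s) (hsK : s ≤ K)
    {t k : ℕ} (ht : 1 ≤ t) (hk : k < K)
    (hnc : ∀ v, (t - 1) * s ≤ v → v < t * s → v % K ≠ k) :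
    ggA K s (t + 1) k = ggA K s t k + 1 := by
  by_cases h1 : k < (t - 1) * s
  · have h2 : k < t * s := lt_of_lt_of_le h1 (Nat.mul_le_mul_right s (by omega))
    simp only [ggA, Nat.add_sub_cancel]
    rw [if_pos h2, if_pos h1]
    set j := ((t - 1) * s - 1 - k) / K with hj
    set j' := (t * s - 1 - k) / K with hj'
    have hub : j * K ≤ (t - 1) * s - 1 - k := Nat.div_mul_le_self _ _
    have hub' : j' * K ≤ t * s - 1 - k := Nat.div_mul_le_self _ _
    have hts : (t - 1) * s ≤ t * s := Nat.mul_le_mul_right s (by omega)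
    have hji : j ≤ j' := Nat.div_le_div_right (by omega)
    have hjj : j' = j := by
      by_contra hne
      have hj1 : j + 1 ≤ j' := by omega
      have hlow : (t - 1) * s - 1 - k < (j + 1) * K := by
        rw [hj]
        exact lt_div_succ_mul _ _ hK
      have hmono : (j + 1) * K ≤ j' * K := Nat.mul_le_mul_right K hj1
      have hv1 : (t - 1) * s ≤ k + (j + 1) * K := by omega
      have hv2 : k + (j + 1) * K < t * s := by omega
      exact hnc _ hv1 hv2 (by rw [Nat.add_mul_mod_self_right]; exact Nat.mod_eq_of_lt hk)
    rw [hjj]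
    have hXs : (k + j * K) / s < t - 1 := by
      rw [Nat.div_lt_iff_lt_mul hs]
      omega
    omega
  · have h2 : ¬ k < t * s := by
      intro h
      exact hnc k (by omega) h (Nat.mod_eq_of_lt hk)
    simp only [ggA, Nat.add_sub_cancel]
    rw [if_neg h2, if_neg h1]
def FA (s n : ℕ) : ℕ := ∑ m ∈ Finset.range n, m / s

lemma hermiteA {s : ℕ} (hs : 0 < s) (n : ℕ) :
    ∑ j ∈ Finset.range s, (n + j) / s = n := by
  induction n with
  | zero =>
      refine Finset.sum_eq_zero fun j hj => ?_
      exact Nat.div_eq_of_lt (by simpa using Finset.mem_range.mp hj)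
  | succ n ih =>
      have hT1 : ∑ j ∈ Finset.range (s + 1), (n + j) / s
          = (∑ j ∈ Finset.range s, (n + j) / s) + (n + s) / s :=
        Finset.sum_range_succ _ s
      have hT2 : ∑ j ∈ Finset.range (s + 1), (n + j) / s
          = (∑ j ∈ Finset.range s, (n + (j + 1)) / s) + (n + 0) / s :=
        Finset.sum_range_succ' _ s
      have h3 : (n + s) / s = (n + 0) / s + 1 := by
        rw [Nat.add_zero]; exact Nat.add_div_right n hs
      have h4 : ∑ j ∈ Finset.range s, (n + 1 + j) / s
          = ∑ j ∈ Finset.range s, (n + (j + 1)) / s :=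
        Finset.sum_congr rfl fun j _ => by rw [show n + 1 + j = n + (j + 1) by omega]
      omega

lemma FA_add {s : ℕ} (hs : 0 < s) (n : ℕ) : FA s (n + s) = FA s n + n := by
  unfold FA
  rw [Finset.sum_range_add, hermiteA hs n]

lemma FA_small {s n : ℕ} (hn : n ≤ s) : FA s n = 0 :=
  Finset.sum_eq_zero fun m hm => Nat.div_eq_of_lt (by
    have := Finset.mem_range.mp hm; omega)

lemma FA_mul {s : ℕ} (hs : 0 < s) : ∀ q, 2 * FA s (q * s) = q * (q - 1) * s := by
  intro q
  induction q with
  | zero => simp [FA]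
  | succ q ih =>
      have h1 : (q + 1) * s = q * s + s := by ring
      have h2 : FA s (q * s + s) = FA s (q * s) + q * s := FA_add hs _
      have key : q * (q - 1) * s + 2 * (q * s) = (q + 1) * ((q + 1) - 1) * s := by
        cases q with
        | zero => simp
        | succ p => simp only [Nat.add_sub_cancel]; ring
      rw [h1, h2]
      omega

lemma ggA_closed {K s t k : ℕ} (hK : 0 < K) (hs : 0 < s) (hk : k < K)
    (hKt : K ≤ (t - 1) * s) :
    ggA K s t k + ((t - 1) * s - 1 - ((t - 1) * s - 1 - k) % K) / s = t - 1 := by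
  have hkt : k < (t - 1) * s := lt_of_lt_of_le hk hKt
  simp only [ggA, if_pos hkt]
  have hd := Nat.div_add_mod ((t - 1) * s - 1 - k) K
  have hcomm : ((t - 1) * s - 1 - k) / K * K = K * (((t - 1) * s - 1 - k) / K) :=
    Nat.mul_comm _ _
  have hmlt : ((t - 1) * s - 1 - k) % K < K := Nat.mod_lt _ hK
  have hmle : ((t - 1) * s - 1 - k) % K ≤ (t - 1) * s - 1 - k := Nat.mod_le _ _
  have heq : k + ((t - 1) * s - 1 - k) / K * K
      = (t - 1) * s - 1 - ((t - 1) * s - 1 - k) % K := by omega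
  rw [heq]
  have hAlt : ((t - 1) * s - 1 - ((t - 1) * s - 1 - k) % K) / s < t - 1 := by
    rw [Nat.div_lt_iff_lt_mul hs]
    omega
  generalize hX : ((t - 1) * s - 1 - ((t - 1) * s - 1 - k) % K) / s = X at hAlt ⊢
  omega

lemma involA {N K a : ℕ} (hK : 0 < K) (ha : a < K) (hN : K ≤ N + 1) :
    (N - (N - a) % K) % K = a := by
  have hd := Nat.div_add_mod (N - a) K
  have hcomm : (N - a) / K * K = K * ((N - a) / K) := Nat.mul_comm _ _
  have hmlt : (N - a) % K < K := Nat.mod_lt _ hK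
  have hmle : (N - a) % K ≤ N - a := Nat.mod_le _ _
  have heq : N - (N - a) % K = a + (N - a) / K * K := by omega
  rw [heq, Nat.add_mul_mod_self_right, Nat.mod_eq_of_lt ha]

lemma masterA {K s t : ℕ} (hK : 0 < K) (hs : 0 < s) (hKt : K ≤ (t - 1) * s) :
    (∑ k ∈ Finset.range K, ggA K s t k) + FA s ((t - 1) * s)
      = K * (t - 1) + FA s ((t - 1) * s - K) := by
  have hsum1 : (∑ k ∈ Finset.range K, ggA K s t k)
      + (∑ k ∈ Finset.range K, ((t - 1) * s - 1 - ((t - 1) * s - 1 - k) % K) / s)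
      = K * (t - 1) := by
    rw [← Finset.sum_add_distrib,
      Finset.sum_congr rfl (fun k hk => ggA_closed hK hs (Finset.mem_range.mp hk) hKt),
      Finset.sum_const, Finset.card_range, smul_eq_mul]
  have hre : (∑ k ∈ Finset.range K, ((t - 1) * s - 1 - ((t - 1) * s - 1 - k) % K) / s)
      = ∑ r ∈ Finset.range K, ((t - 1) * s - 1 - r) / s := by
    refine Finset.sum_nbij' (fun k => ((t - 1) * s - 1 - k) % K)
      (fun r => ((t - 1) * s - 1 - r) % K)
      (fun a _ => Finset.mem_range.mpr (Nat.mod_lt _ hK))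
      (fun a _ => Finset.mem_range.mpr (Nat.mod_lt _ hK))
      (fun a ha => involA hK (Finset.mem_range.mp ha) (by omega))
      (fun a ha => involA hK (Finset.mem_range.mp ha) (by omega))
      (fun a _ => rfl)
  have hrefl : ∑ r ∈ Finset.range K, ((t - 1) * s - 1 - r) / s
      = ∑ j ∈ Finset.range K, ((t - 1) * s - K + j) / s := by
    rw [← Finset.sum_range_reflect (fun j => ((t - 1) * s - K + j) / s) K]
    refine Finset.sum_congr rfl fun r hr => ?_
    have hrK := Finset.mem_range.mp hr
    congr 1
    omega
  have hsplit : FA s ((t - 1) * s - K) + (∑ j ∈ Finset.range K, ((t - 1) * s - K + j) / s)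
      = FA s ((t - 1) * s) := by
    have h1 : FA s ((t - 1) * s) = FA s ((t - 1) * s - K + K) := by congr 1; omega
    rw [h1]
    exact (Finset.sum_range_add (fun m => m / s) ((t - 1) * s - K) K).symm
  omega

lemma FA_chain {K s t' : ℕ} (hK : 0 < K) (hs : 0 < s)
    (h1 : (t' - 1) * s < K) (h2 : K ≤ t' * s) :
    ∀ q, t' ≤ q → 2 * FA s (q * s) + 2 * (t' * K)
      = 2 * FA s (q * s - K) + 2 * (K * q) + t' * (t' - 1) * s := by
  intro q hq
  induction q, hq using Nat.le_induction with
  | base =>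
      have e1 : 2 * FA s (t' * s) = t' * (t' - 1) * s := FA_mul hs t'
      have e2 : FA s (t' * s - K) = 0 := FA_small (by
        have h3 : t' * s = (t' - 1) * s + s := by
          obtain ⟨p, rfl⟩ : ∃ p, t' = p + 1 := ⟨t' - 1, by
            rcases Nat.eq_zero_or_pos t' with h | h
            · subst h; simp at h2; omega
            · omega⟩
          simp [Nat.add_mul]
        omega)
      have e3 : K * t' = t' * K := Nat.mul_comm _ _
      omega
  | succ q hq ih =>
      have hKq : K ≤ q * s := le_trans h2 (Nat.mul_le_mul_right s hq)
      have e1 : (q + 1) * s = q * s + s := by ring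
      have e2 : FA s (q * s + s) = FA s (q * s) + q * s := FA_add hs _
      have e3 : q * s + s - K = q * s - K + s := by omega
      have e4 : FA s (q * s - K + s) = FA s (q * s - K) + (q * s - K) := FA_add hs _
      have e5 : K * (q + 1) = K * q + K := by ring
      rw [e1, e2, e3, e4, e5]
      omega

lemma sum_ggA {K s t' : ℕ} (hK : 0 < K) (hs : 0 < s)
    (h1 : (t' - 1) * s < K) (h2 : K ≤ t' * s) :
    ∀ t, t' + 1 ≤ t →
      2 * (∑ k ∈ Finset.range K, ggA K s t k) + t' * (t' - 1) * s = 2 * (t' * K) := by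
  intro t ht
  have hKt : K ≤ (t - 1) * s := le_trans h2 (Nat.mul_le_mul_right s (by omega))
  have hm := masterA hK hs hKt
  have hc := FA_chain hK hs h1 h2 (t - 1) (by omega)
  omega
/-- Minimum sum relay AoI in closed form: with sampling budget `s < K` and
`t' = ⌈K/s⌉`, for every policy and every `t ≥ t' + 1` the sum of relay ages is at least
`t'K − t'(t'−1)s/2`, and round-robin sampling achieves this bound. -/
theorem stmt12 (K s : ℕ) (hs : 1 ≤ s) (hsK : s < K) (t' : ℕ)
    (ht' : t' = (K + s - 1) / s) :
    (∀ (S : ℕ → Finset (Fin K)) (g : ℕ → Fin K → ℕ),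
      (∀ t, 1 ≤ t → (S t).card = s) → (∀ k, g 1 k = 1) →
      (∀ t, 1 ≤ t → ∀ k ∈ S t, g (t + 1) k = 1) →
      (∀ t, 1 ≤ t → ∀ k ∉ S t, g (t + 1) k = g t k + 1) →
      ∀ t, t' + 1 ≤ t →
        (t' : ℚ) * K - (t' : ℚ) * ((t' : ℚ) - 1) * s / 2 ≤ ∑ k : Fin K, (g t k : ℚ)) ∧
    (∃ (S : ℕ → Finset (Fin K)) (g : ℕ → Fin K → ℕ),
      (∀ t, 1 ≤ t → (S t).card = s) ∧ (∀ k, g 1 k = 1) ∧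
      (∀ t, 1 ≤ t → ∀ k ∈ S t, g (t + 1) k = 1) ∧
      (∀ t, 1 ≤ t → ∀ k ∉ S t, g (t + 1) k = g t k + 1) ∧
      (∀ t, t' + 1 ≤ t →
        (∑ k : Fin K, (g t k : ℚ)) = (t' : ℚ) * K - (t' : ℚ) * ((t' : ℚ) - 1) * s / 2)) := by
  have hs0 : 0 < s := hs
  have hK0 : 0 < K := by omega
  have hsleK : s ≤ K := le_of_lt hsK
  have htt : t' = (K - 1) / s + 1 := by
    rw [ht', show K + s - 1 = (K - 1) + s by omega, Nat.add_div_right _ hs0]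
  have hf1 : (t' - 1) * s < K := by
    rw [htt]
    simp only [Nat.add_sub_cancel]
    have := Nat.div_mul_le_self (K - 1) s
    omega
  have hf2 : K ≤ t' * s := by
    rw [htt]
    have := lt_div_succ_mul (K - 1) s hs0
    omega
  have hf3 : 2 ≤ t' := by
    rw [htt]
    have h1 : 1 ≤ (K - 1) / s := by
      rw [Nat.le_div_iff_mul_le hs0]
      omega
    omega
  constructor
  · -- lower bound for an arbitrary policy
    intro S g h1 h2 h3 h4 t ht
    have claimC : ∀ u, 1 ≤ u → ∀ k, 1 ≤ g u k ∧ g u k ≤ u ∧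
        (g u k < u → k ∈ S (u - g u k)) := by
      intro u hu
      induction u, hu using Nat.le_induction with
      | base =>
          intro k
          refine ⟨by simp [h2], by simp [h2], ?_⟩
          simp [h2]
      | succ u hu ih =>
          intro k
          by_cases hk : k ∈ S u
          · rw [h3 u hu k hk]
            exact ⟨le_refl 1, by omega, fun _ => by simpa using hk⟩
          · rw [h4 u hu k hk]
            obtain ⟨c1, c2, c3⟩ := ih k
            refine ⟨by omega, by omega, fun h => ?_⟩
            have hlt : g u k < u := by omega
            have hmem := c3 hlt
            have he : u + 1 - (g u k + 1) = u - g u k := by omega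
            rwa [he]
    have hsum_m : ∑ k : Fin K, min (g t k) t'
        = ∑ j ∈ Finset.range t',
            (Finset.univ.filter (fun k : Fin K => j < min (g t k) t')).card := by
      have h5 : ∀ k : Fin K,
          min (g t k) t' = ((Finset.range t').filter (fun j => j < min (g t k) t')).card := by
        intro k
        have he : (Finset.range t').filter (fun j => j < min (g t k) t')
            = Finset.range (min (g t k) t') := by
          ext j
          simp only [Finset.mem_filter, Finset.mem_range]
          omega
        rw [he, Finset.card_range]
      calc ∑ k : Fin K, min (g t k) t'
          = ∑ k : Fin K, ∑ j ∈ Finset.range t', if j < min (g t k) t' then 1 else 0 := by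
            refine Finset.sum_congr rfl fun k _ => ?_
            rw [← Finset.card_filter]
            exact h5 k
        _ = ∑ j ∈ Finset.range t', ∑ k : Fin K, if j < min (g t k) t' then 1 else 0 :=
            Finset.sum_comm
        _ = ∑ j ∈ Finset.range t',
              (Finset.univ.filter (fun k : Fin K => j < min (g t k) t')).card := by
            refine Finset.sum_congr rfl fun j _ => (Finset.card_filter _ _).symm
    have hcard : ∀ j, j < t' →
        K ≤ j * s + (Finset.univ.filter (fun k : Fin K => j < min (g t k) t')).card := by
      intro j hj
      have hsub : (Finset.univ.filter (fun k : Fin K => min (g t k) t' ≤ j))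
          ⊆ (Finset.Icc 1 j).biUnion (fun i => S (t - i)) := by
        intro k hk
        simp only [Finset.mem_filter, Finset.mem_univ, true_and] at hk
        have hgle : g t k ≤ j := by omega
        obtain ⟨c1, c2, c3⟩ := claimC t (by omega) k
        have hglt : g t k < t := by omega
        exact Finset.mem_biUnion.mpr ⟨g t k, Finset.mem_Icc.mpr ⟨c1, hgle⟩, c3 hglt⟩
      have hcb : (Finset.univ.filter (fun k : Fin K => min (g t k) t' ≤ j)).card ≤ j * s := by
        calc (Finset.univ.filter (fun k : Fin K => min (g t k) t' ≤ j)).card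
            ≤ ((Finset.Icc 1 j).biUnion (fun i => S (t - i))).card :=
              Finset.card_le_card hsub
          _ ≤ ∑ i ∈ Finset.Icc 1 j, (S (t - i)).card := Finset.card_biUnion_le
          _ = ∑ i ∈ Finset.Icc 1 j, s :=
              Finset.sum_congr rfl fun i hi => h1 _ (by
                have := Finset.mem_Icc.mp hi
                omega)
          _ = j * s := by
              rw [Finset.sum_const, Nat.card_Icc, smul_eq_mul]
              simp
      have hpn := Finset.card_filter_add_card_filter_not
        (s := (Finset.univ : Finset (Fin K))) (p := fun k : Fin K => min (g t k) t' ≤ j)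
      have hfe : (Finset.univ.filter (fun k : Fin K => ¬ min (g t k) t' ≤ j))
          = (Finset.univ.filter (fun k : Fin K => j < min (g t k) t')) := by
        refine Finset.filter_congr fun k _ => ?_
        simp [Nat.not_le]
      rw [hfe] at hpn
      have hKuniv : (Finset.univ : Finset (Fin K)).card = K := by simp
      omega
    have hmain : t' * K ≤ (∑ j ∈ Finset.range t', j) * s + ∑ k : Fin K, g t k := by
      have h6 : ∑ j ∈ Finset.range t', K
          ≤ ∑ j ∈ Finset.range t',
              (j * s + (Finset.univ.filter (fun k : Fin K => j < min (g t k) t')).card) :=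
        Finset.sum_le_sum fun j hj => hcard j (Finset.mem_range.mp hj)
      rw [Finset.sum_const, Finset.card_range, smul_eq_mul] at h6
      rw [Finset.sum_add_distrib, ← Finset.sum_mul] at h6
      have h7 : ∑ k : Fin K, min (g t k) t' ≤ ∑ k : Fin K, g t k :=
        Finset.sum_le_sum fun k _ => min_le_left _ _
      omega
    have hgauss : (∑ j ∈ Finset.range t', j) * 2 = t' * (t' - 1) :=
      Finset.sum_range_id_mul_two t'
    have h8 : 2 * (t' * K) ≤ t' * (t' - 1) * s + 2 * (∑ k : Fin K, g t k) := by
      have e : 2 * ((∑ j ∈ Finset.range t', j) * s) = t' * (t' - 1) * s := by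
        rw [← hgauss]; ring
      omega
    have h10 : (2 : ℚ) * (t' * K) ≤ (t' : ℚ) * ((t' : ℚ) - 1) * s
        + 2 * ∑ k : Fin K, (g t k : ℚ) := by
      have := (Nat.cast_le (α := ℚ)).mpr h8
      push_cast [Nat.cast_sub (show 1 ≤ t' by omega)] at this
      convert this using 2 <;> push_cast <;> ring_nf
    linarith [h10]
  · -- round-robin achieves the bound
    refine ⟨fun u => SSA K s u, fun u k => ggA K s u k.val, ?_, ?_, ?_, ?_, ?_⟩
    · intro u hu
      exact card_SSA hK0 hsleK hu
    · intro k
      exact ggA_one K s k.val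
    · intro u hu k hk
      obtain ⟨v, hv1, hv2, hv3⟩ := (mem_SSA k).mp hk
      exact ggA_refresh hK0 hs0 hsleK hu k.isLt hv1 hv2 hv3
    · intro u hu k hk
      have hnc : ∀ v, (u - 1) * s ≤ v → v < u * s → v % K ≠ k.val := by
        intro v a b c
        exact hk ((mem_SSA k).mpr ⟨v, a, b, c⟩)
      exact ggA_step hK0 hs0 hsleK hu k.isLt hnc
    · intro t ht
      have h8 := sum_ggA hK0 hs0 hf1 hf2 t ht
      have hfin : ∑ k : Fin K, (ggA K s t k.val : ℚ)
          = ((∑ k ∈ Finset.range K, ggA K s t k : ℕ) : ℚ) := by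
        rw [← Fin.sum_univ_eq_sum_range (fun i => ggA K s t i) K]
        push_cast
        rfl
      have h9 : (2 : ℚ) * ((∑ k ∈ Finset.range K, ggA K s t k : ℕ) : ℚ)
          + (t' : ℚ) * ((t' : ℚ) - 1) * s = 2 * ((t' : ℚ) * K) := by
        have := congrArg (Nat.cast : ℕ → ℚ) h8
        push_cast [Nat.cast_sub (show 1 ≤ t' by omega)] at this
        convert this using 2 <;> push_cast <;> ring_nf
      rw [hfin]
      linarith [h9]
end

section
/- Minimum sum destination AoI in closed form: in the errorless relay AoI model with S = U < K and t'' = ⌈K/U⌉ + 1, for every policy and every t ≥ t'' + 1, Σ_{k=1}^K h_k(t) ≥ t''K − (t''−1)(t''−2)U/2, and there exists a policy (greedy) achieving equality for all such t. -/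
namespace Stmt13
variable (K s : ℕ)

/-- window start -/
def Uset (t : ℕ) : Finset (Fin K) :=
  Finset.univ.filter (fun k => (k.val + (K - t * s % K)) % K < s)

lemma mem_Uset (hK : 0 < K) (t : ℕ) (k : Fin K) :
    k ∈ Uset K s t ↔ (k.val + (K - t * s % K)) % K < s := by
  simp [Uset]

lemma Uset_card (hs : 0 < s) (hsK : s ≤ K) (t : ℕ) : (Uset K s t).card = s := by
  have hK : 0 < K := lt_of_lt_of_le hs hsK
  set w := t * s % K with hw
  have hwK : w < K := Nat.mod_lt _ hK
  have hb : (Uset K s t).card = (Finset.range s).card := by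
    apply Finset.card_bij'   (fun k _ => (k.val + (K - w)) % K)
      (fun x _ => (⟨(w + x) % K, Nat.mod_lt _ hK⟩ : Fin K))
    · intro k hk
      rw [mem_Uset K s hK] at hk
      simpa using hk
    · intro x hx
      rw [Finset.mem_range] at hx
      rw [mem_Uset K s hK]
      have : ((w + x) % K + (K - w)) % K = x := by
        rw [Nat.mod_add_mod]
        have h1 : w + x + (K - w) = x + K := by omega
        rw [h1, Nat.add_mod_right, Nat.mod_eq_of_lt (lt_of_lt_of_le hx hsK)]
      rw [this]; exact hx
    · intro k hk
      ext
      show (w + (k.val + (K - w)) % K) % K = k.val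
      rw [Nat.add_mod_mod]
      have h1 : w + (k.val + (K - w)) = k.val + K := by omega
      rw [h1, Nat.add_mod_right, Nat.mod_eq_of_lt k.isLt]
    · intro x hx
      rw [Finset.mem_range] at hx
      show ((w + x) % K + (K - w)) % K = x
      rw [Nat.mod_add_mod]
      have h1 : w + x + (K - w) = x + K := by omega
      rw [h1, Nat.add_mod_right, Nat.mod_eq_of_lt (lt_of_lt_of_le hx hsK)]
  simpa using hb

end Stmt13

namespace Stmt13
variable (K s : ℕ)

/-- greedy sensing function: S t = Uset (t+1) -/
def gfun : ℕ → Fin K → ℕ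
  | 0, _ => 1
  | 1, _ => 1
  | (t + 2), k => if k ∈ Uset K s (t + 2) then 1 else gfun (t + 1) k + 1

/-- destination AoI under greedy -/
def hfun : ℕ → Fin K → ℕ
  | 0, _ => 1
  | 1, _ => 1
  | (t + 2), k => if k ∈ Uset K s (t + 1) then gfun K s (t + 1) k + 1
      else hfun (t + 1) k + 1

lemma translate (hK : 0 < K) (t e : ℕ) (he : e ≤ t) (k : Fin K) :
    (k ∈ Uset K s (t - e)) ↔
      ((k.val + (K - t * s % K)) % K + e * s) % K < s := by
  have key : ∀ τ : ℕ, (k.val + (K - τ * s % K) + τ * s) % K = k.val % K := by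
    intro τ
    have hd := Nat.div_add_mod (τ * s) K
    have hm : τ * s % K < K := Nat.mod_lt _ hK
    have h1 : k.val + (K - τ * s % K) + τ * s = k.val + K * (1 + τ * s / K) := by
      ring_nf
      omega
    rw [h1, Nat.add_mul_mod_self_left]
  have h2 : ((k.val + (K - t * s % K)) % K + e * s + (t - e) * s) % K
      = (k.val + (K - (t - e) * s % K) + (t - e) * s) % K := by
    have h3 : e * s + (t - e) * s = t * s := by
      rw [← Nat.add_mul]; congr 1; omega
    rw [key, add_assoc, h3, Nat.mod_add_mod, key]
  have h4 : ((k.val + (K - t * s % K)) % K + e * s) % K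
      = (k.val + (K - (t - e) * s % K)) % K :=
    Nat.ModEq.add_right_cancel' ((t - e) * s) h2
  rw [mem_Uset K s hK, ← h4]

end Stmt13

namespace Stmt13
variable {K s : ℕ}

lemma ceil_bounds (s n : ℕ) (hs : 0 < s) (hn : 0 < n) :
    n ≤ ((n + s - 1) / s) * s ∧ ((n + s - 1) / s) * s < n + s := by
  have hq : (n + s - 1) / s = (n - 1) / s + 1 := by
    rw [show n + s - 1 = (n - 1) + s by omega, Nat.add_div_right _ hs]
  have e1 : s * ((n - 1) / s) + (n - 1) % s = n - 1 := Nat.div_add_mod _ _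
  have e2 : (n - 1) % s < s := Nat.mod_lt _ hs
  have e3 : ((n - 1) / s + 1) * s = s * ((n - 1) / s) + s := by ring
  rw [hq, e3]
  omega

lemma hfun_closed (hs : 0 < s) (hsK : s < K) (t : ℕ) (k : Fin K)
    (ht : (K + s - 1) / s + 2 ≤ t) :
    hfun K s t k = (K - (k.val + (K - t * s % K)) % K + s - 1) / s + 1 := by
  have hK : 0 < K := by omega
  set m := (K + s - 1) / s with hm
  set ρ := (k.val + (K - t * s % K)) % K with hρdef
  have hρ : ρ < K := Nat.mod_lt _ hK
  set d := (K - ρ + s - 1) / s with hd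
  obtain ⟨hb1, hb2⟩ := ceil_bounds s (K - ρ) hs (by omega)
  rw [← hd] at hb1 hb2
  have hd1 : 1 ≤ d := by
    rcases Nat.eq_zero_or_pos d with h0 | h1
    · rw [h0, zero_mul] at hb1; omega
    · exact h1
  have hdm : d ≤ m := Nat.div_le_div_right (by omega)
  have hmem : k ∈ Uset K s (t - d) := by
    rw [translate K s hK t d (by omega)]
    rw [← hρdef]
    have h1 : (ρ + d * s) % K = ρ + d * s - K := by
      rw [Nat.mod_eq_sub_mod (by omega), Nat.mod_eq_of_lt (by omega)]
    omega
  have hnmem : ∀ e, 1 ≤ e → e < d → k ∉ Uset K s (t - e) := by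
    intro e he1 he2
    rw [translate K s hK t e (by omega), ← hρdef]
    have hes1 : e * s + s ≤ d * s := by
      have h5 : (e + 1) * s ≤ d * s := Nat.mul_le_mul_right s (by omega)
      have h6 : (e + 1) * s = e * s + s := by ring
      omega
    have hes2 : s ≤ e * s := by
      calc s = 1 * s := (one_mul s).symm
      _ ≤ e * s := Nat.mul_le_mul_right s he1
    have h1 : (ρ + e * s) % K = ρ + e * s := Nat.mod_eq_of_lt (by omega)
    omega
  set τ := t - d with hτ
  have hτ2 : 2 ≤ τ := by omega
  have hupd : hfun K s (τ + 1) k = 2 := by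
    obtain ⟨v, hv⟩ : ∃ v, τ = v + 2 := ⟨τ - 2, by omega⟩
    have h1 : τ + 1 = (v + 1) + 2 := by omega
    rw [h1]
    have h2 : k ∈ Uset K s (v + 1 + 1) := by rw [show v + 1 + 1 = τ by omega]; exact hmem
    simp only [hfun, if_pos h2]
    have h3 : gfun K s (v + 1 + 1) k = 1 := by
      show gfun K s (v + 2) k = 1
      have h4 : k ∈ Uset K s (v + 2) := by rw [show v + 2 = τ from hv.symm]; exact hmem
      simp only [gfun, if_pos h4]
    rw [show v + 1 + 1 = v + 2 by ring] at h3 ⊢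
    rw [h3]
  have haging : ∀ j, j ≤ d - 1 → hfun K s (τ + 1 + j) k = 2 + j := by
    intro j
    induction j with
    | zero => intro _; simpa using hupd
    | succ n ih =>
      intro hn
      have h1 : hfun K s (τ + 1 + n) k = 2 + n := ih (by omega)
      have h2 : τ + 1 + (n + 1) = (τ + n) + 2 := by ring
      rw [h2]
      have hne : k ∉ Uset K s (τ + n + 1) := by
        have h3 : τ + n + 1 = t - (d - (n + 1)) := by omega
        rw [h3]
        exact hnmem (d - (n + 1)) (by omega) (by omega)
      simp only [hfun, if_neg hne]
      rw [show τ + n + 1 = τ + 1 + n by ring, h1]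
      omega
  have hfin := haging (d - 1) le_rfl
  rw [show τ + 1 + (d - 1) = t by omega] at hfin
  rw [hfin]
  omega

end Stmt13

namespace Stmt13

lemma sum_ceil (K s : ℕ) (hs : 0 < s) (hsK : s < K) :
    ∑ y ∈ Finset.Icc 1 K, (y + s - 1) / s
      = ∑ j ∈ Finset.range ((K + s - 1) / s), (K - j * s) := by
  set m := (K + s - 1) / s with hm
  have key : ∀ y ∈ Finset.Icc 1 K,
      (y + s - 1) / s = ((Finset.range m).filter (fun j => j * s < y)).card := by
    intro y hy
    rw [Finset.mem_Icc] at hy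
    have hc : (y + s - 1) / s ≤ m := Nat.div_le_div_right (by omega)
    have hiff : ∀ j, j * s < y ↔ j < (y + s - 1) / s := by
      intro j
      have h1 : j + 1 ≤ (y + s - 1) / s ↔ (j + 1) * s ≤ y + s - 1 :=
        Nat.le_div_iff_mul_le hs
      have h2 : (j + 1) * s = j * s + s := by ring
      omega
    have h3 : (Finset.range m).filter (fun j => j * s < y)
        = Finset.range ((y + s - 1) / s) := by
      ext j
      simp only [Finset.mem_filter, Finset.mem_range, hiff j]
      omega
    rw [h3, Finset.card_range]
  calc ∑ y ∈ Finset.Icc 1 K, (y + s - 1) / s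
      = ∑ y ∈ Finset.Icc 1 K, ∑ j ∈ Finset.range m, if j * s < y then 1 else 0 := by
        refine Finset.sum_congr rfl (fun y hy => ?_)
        rw [key y hy, Finset.card_filter]
    _ = ∑ j ∈ Finset.range m, ∑ y ∈ Finset.Icc 1 K, if j * s < y then 1 else 0 :=
        Finset.sum_comm
    _ = ∑ j ∈ Finset.range m, (K - j * s) := by
        refine Finset.sum_congr rfl (fun j hj => ?_)
        rw [Finset.mem_range] at hj
        rw [← Finset.card_filter]
        have h4 : (Finset.Icc 1 K).filter (fun y => j * s < y)
            = Finset.Icc (j * s + 1) K := by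
          ext y
          simp only [Finset.mem_filter, Finset.mem_Icc]
          omega
        rw [h4, Nat.card_Icc]
        omega

lemma sum_hfun (K s : ℕ) (hs : 0 < s) (hsK : s < K) (t : ℕ)
    (ht : (K + s - 1) / s + 2 ≤ t) :
    ∑ k : Fin K, hfun K s t k
      = K + ∑ j ∈ Finset.range ((K + s - 1) / s), (K - j * s) := by
  have hK : 0 < K := by omega
  rw [Finset.sum_congr rfl (fun k _ => hfun_closed hs hsK t k ht)]
  set w := t * s % K with hw
  have hbij : Function.Bijective
      (fun k : Fin K => (⟨(k.val + (K - w)) % K, Nat.mod_lt _ hK⟩ : Fin K)) := by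
    rw [Fintype.bijective_iff_injective_and_card]
    refine ⟨?_, rfl⟩
    intro k1 k2 hk
    have h2 : (k1.val + (K - w)) % K = (k2.val + (K - w)) % K := congrArg Fin.val hk
    have h3 : k1.val % K = k2.val % K := Nat.ModEq.add_right_cancel' (K - w) h2
    ext
    rwa [Nat.mod_eq_of_lt k1.isLt, Nat.mod_eq_of_lt k2.isLt] at h3
  have h4 := Fintype.sum_bijective _ hbij
    (fun k : Fin K => (K - (k.val + (K - w)) % K + s - 1) / s + 1)
    (fun k : Fin K => (K - k.val + s - 1) / s + 1)
    (fun k => rfl)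
  rw [h4, Fin.sum_univ_eq_sum_range (fun x => (K - x + s - 1) / s + 1) K,
    Finset.sum_add_distrib]
  simp only [Finset.sum_const, Finset.card_range, smul_eq_mul, mul_one]
  have h5 : ∑ x ∈ Finset.range K, (K - x + s - 1) / s
      = ∑ y ∈ Finset.Icc 1 K, (y + s - 1) / s := by
    refine Finset.sum_nbij' (fun x => K - x) (fun y => K - y) ?_ ?_ ?_ ?_ ?_
    · intro x hx; rw [Finset.mem_range] at hx; rw [Finset.mem_Icc]; omega
    · intro y hy; rw [Finset.mem_Icc] at hy; rw [Finset.mem_range]; omega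
    · intro x hx; rw [Finset.mem_range] at hx; omega
    · intro y hy; rw [Finset.mem_Icc] at hy; omega
    · intro x hx; rfl
  rw [h5, sum_ceil K s hs hsK]
  ring

end Stmt13

namespace Stmt13

lemma lower_nat (K s : ℕ) (hs : 1 ≤ s) (hsK : s < K)
    (S U : ℕ → Finset (Fin K)) (g h : ℕ → Fin K → ℕ)
    (hUcard : ∀ t, 1 ≤ t → (U t).card = s)
    (hg1 : ∀ k, g 1 k = 1) (hh1 : ∀ k, h 1 k = 1)
    (hSg1 : ∀ t, 1 ≤ t → ∀ k ∈ S t, g (t + 1) k = 1)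
    (hSg2 : ∀ t, 1 ≤ t → ∀ k ∉ S t, g (t + 1) k = g t k + 1)
    (hUh1 : ∀ t, 1 ≤ t → ∀ k ∈ U t, h (t + 1) k = g t k + 1)
    (hUh2 : ∀ t, 1 ≤ t → ∀ k ∉ U t, h (t + 1) k = h t k + 1)
    (t : ℕ) (ht : (K + s - 1) / s + 2 ≤ t) :
    ((K + s - 1) / s + 1) * K ≤ (∑ k : Fin K, h t k)
      + ∑ j ∈ Finset.range ((K + s - 1) / s + 1 - 2), (j + 1) * s := by
  set m := (K + s - 1) / s with hm
  clear_value m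
  clear hm
  have hg_pos : ∀ t, 1 ≤ t → ∀ k, 1 ≤ g t k := by
    intro t
    induction t with
    | zero => omega
    | succ n ih =>
      intro _ k
      rcases Nat.eq_zero_or_pos n with h0 | h1
      · subst h0; rw [hg1 k]
      · by_cases hc : k ∈ S n
        · rw [hSg1 n h1 k hc]
        · rw [hSg2 n h1 k hc]; omega
  have hh_pos : ∀ t, 1 ≤ t → ∀ k, 1 ≤ h t k := by
    intro t
    induction t with
    | zero => omega
    | succ n ih =>
      intro _ k
      rcases Nat.eq_zero_or_pos n with h0 | h1
      · subst h0; rw [hh1 k]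
      · by_cases hc : k ∈ U n
        · rw [hUh1 n h1 k hc]; omega
        · rw [hUh2 n h1 k hc]; omega
  have hh2 : ∀ t, 2 ≤ t → ∀ k, 2 ≤ h t k := by
    intro t
    induction t with
    | zero => omega
    | succ n ih =>
      intro h2 k
      have h1 : 1 ≤ n := by omega
      by_cases hc : k ∈ U n
      · rw [hUh1 n h1 k hc]
        have := hg_pos n h1 k; omega
      · rw [hUh2 n h1 k hc]
        have := hh_pos n h1 k; omega
  have htrace : ∀ j t, j + 2 ≤ t → ∀ k, h (t + 1) k ≤ j + 2 → ∃ i ≤ j, k ∈ U (t - i) := by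
    intro j
    induction j with
    | zero =>
      intro t ht0 k hk
      by_cases hc : k ∈ U t
      · exact ⟨0, le_rfl, by simpa using hc⟩
      · exfalso
        rw [hUh2 t (by omega) k hc] at hk
        have := hh2 t (by omega) k
        omega
    | succ n ih =>
      intro t ht0 k hk
      by_cases hc : k ∈ U t
      · exact ⟨0, by omega, by simpa using hc⟩
      · rw [hUh2 t (by omega) k hc] at hk
        obtain ⟨t', rfl⟩ : ∃ t', t = t' + 1 := ⟨t - 1, by omega⟩
        obtain ⟨i, hi, hmem⟩ := ih t' (by omega) k (by omega)
        exact ⟨i + 1, by omega, by rw [show t' + 1 - (i + 1) = t' - i by omega]; exact hmem⟩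
  have hcard : ∀ j, j + 3 ≤ t →
      (Finset.univ.filter (fun k : Fin K => h t k ≤ j + 2)).card ≤ (j + 1) * s := by
    intro j hj
    obtain ⟨t', rfl⟩ : ∃ t', t = t' + 1 := ⟨t - 1, by omega⟩
    have hsub : Finset.univ.filter (fun k : Fin K => h (t' + 1) k ≤ j + 2)
        ⊆ (Finset.range (j + 1)).biUnion (fun i => U (t' - i)) := by
      intro k hk
      rw [Finset.mem_filter] at hk
      obtain ⟨i, hi, hmem⟩ := htrace j t' (by omega) k hk.2
      exact Finset.mem_biUnion.mpr ⟨i, Finset.mem_range.mpr (by omega), hmem⟩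
    calc (Finset.univ.filter (fun k : Fin K => h (t' + 1) k ≤ j + 2)).card
        ≤ ((Finset.range (j + 1)).biUnion (fun i => U (t' - i))).card :=
          Finset.card_le_card hsub
      _ ≤ ∑ i ∈ Finset.range (j + 1), (U (t' - i)).card := Finset.card_biUnion_le
      _ = ∑ i ∈ Finset.range (j + 1), s := by
          refine Finset.sum_congr rfl (fun i hi => ?_)
          rw [Finset.mem_range] at hi
          exact hUcard (t' - i) (by omega)
      _ = (j + 1) * s := by rw [Finset.sum_const, Finset.card_range, smul_eq_mul]
  have hsum_sub : ∑ k : Fin K, (m + 1 - h t k)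
      ≤ ∑ j ∈ Finset.range (m + 1 - 2), (j + 1) * s := by
    have hstep1 : ∀ k : Fin K, m + 1 - h t k
        = ((Finset.range (m + 1 - 2)).filter (fun j => h t k ≤ j + 2)).card := by
      intro k
      have hk2 : 2 ≤ h t k := hh2 t (by omega) k
      have hfil : (Finset.range (m + 1 - 2)).filter (fun j => h t k ≤ j + 2)
          = Finset.Ico (h t k - 2) (m + 1 - 2) := by
        ext j
        simp only [Finset.mem_filter, Finset.mem_range, Finset.mem_Ico]
        omega
      rw [hfil, Nat.card_Ico]
      omega
    calc ∑ k : Fin K, (m + 1 - h t k)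
        = ∑ k : Fin K, ∑ j ∈ Finset.range (m + 1 - 2),
            if h t k ≤ j + 2 then 1 else 0 := by
          refine Finset.sum_congr rfl (fun k _ => ?_)
          rw [hstep1 k, Finset.card_filter]
      _ = ∑ j ∈ Finset.range (m + 1 - 2), ∑ k : Fin K,
            if h t k ≤ j + 2 then 1 else 0 := Finset.sum_comm
      _ ≤ ∑ j ∈ Finset.range (m + 1 - 2), (j + 1) * s := by
          refine Finset.sum_le_sum (fun j hj => ?_)
          rw [Finset.mem_range] at hj
          rw [← Finset.card_filter]
          exact hcard j (by omega)
  have hpoint : ∀ k : Fin K, m + 1 ≤ h t k + (m + 1 - h t k) := by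
    intro k
    omega
  have htotal : (m + 1) * K ≤ (∑ k : Fin K, h t k) + (∑ k : Fin K, (m + 1 - h t k)) := by
    calc (m + 1) * K = ∑ _k : Fin K, (m + 1) := by
          rw [Finset.sum_const, Finset.card_univ, Fintype.card_fin, smul_eq_mul, mul_comm]
      _ ≤ ∑ k : Fin K, (h t k + (m + 1 - h t k)) := Finset.sum_le_sum (fun k _ => hpoint k)
      _ = (∑ k : Fin K, h t k) + (∑ k : Fin K, (m + 1 - h t k)) :=
          Finset.sum_add_distrib
  omega

end Stmt13




/-- Minimum sum destination AoI in closed form: with `S = U = s < K` and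
`t'' = ⌈K/s⌉ + 1`, every policy satisfies `Σ_k h_k(t) ≥ t''K − (t''−1)(t''−2)s/2` for all
`t ≥ t'' + 1`, and some (greedy) policy achieves equality for all such `t`. -/
theorem stmt13 (K s : ℕ) (hs : 1 ≤ s) (hsK : s < K) (t'' : ℕ)
    (ht'' : t'' = (K + s - 1) / s + 1) :
    (∀ (S U : ℕ → Finset (Fin K)) (g h : ℕ → Fin K → ℕ),
      (∀ t, 1 ≤ t → (S t).card = s) → (∀ t, 1 ≤ t → (U t).card = s) →
      (∀ k, g 1 k = 1) → (∀ k, h 1 k = 1) →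
      (∀ t, 1 ≤ t → ∀ k ∈ S t, g (t + 1) k = 1) →
      (∀ t, 1 ≤ t → ∀ k ∉ S t, g (t + 1) k = g t k + 1) →
      (∀ t, 1 ≤ t → ∀ k ∈ U t, h (t + 1) k = g t k + 1) →
      (∀ t, 1 ≤ t → ∀ k ∉ U t, h (t + 1) k = h t k + 1) →
      ∀ t, t'' + 1 ≤ t →
        (t'' : ℚ) * K - ((t'' : ℚ) - 1) * ((t'' : ℚ) - 2) * s / 2 ≤
          ∑ k : Fin K, (h t k : ℚ)) ∧
    (∃ (S U : ℕ → Finset (Fin K)) (g h : ℕ → Fin K → ℕ),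
      (∀ t, 1 ≤ t → (S t).card = s) ∧ (∀ t, 1 ≤ t → (U t).card = s) ∧
      (∀ k, g 1 k = 1) ∧ (∀ k, h 1 k = 1) ∧
      (∀ t, 1 ≤ t → ∀ k ∈ S t, g (t + 1) k = 1) ∧
      (∀ t, 1 ≤ t → ∀ k ∉ S t, g (t + 1) k = g t k + 1) ∧
      (∀ t, 1 ≤ t → ∀ k ∈ U t, h (t + 1) k = g t k + 1) ∧
      (∀ t, 1 ≤ t → ∀ k ∉ U t, h (t + 1) k = h t k + 1) ∧
      (∀ t, t'' + 1 ≤ t →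
        (∑ k : Fin K, (h t k : ℚ)) =
          (t'' : ℚ) * K - ((t'' : ℚ) - 1) * ((t'' : ℚ) - 2) * s / 2)) := by
  have hK : 0 < K := by omega
  set m := (K + s - 1) / s with hm
  have hm2 : 2 ≤ m := by
    rw [hm]
    rw [Nat.le_div_iff_mul_le hs]
    omega
  -- Gauss sum facts
  have hGa : (∑ j ∈ Finset.range (m - 1), (j + 1)) * 2 = m * (m - 1) := by
    have h1 := Finset.sum_range_succ' (fun i => i) (m - 1)
    have h2 := Finset.sum_range_id_mul_two m
    rw [show m - 1 + 1 = m by omega] at h1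
    omega
  have hGaQ : ((∑ j ∈ Finset.range (m - 1), (j + 1) : ℕ) : ℚ) * 2
      = (m : ℚ) * ((m : ℚ) - 1) := by
    have := hGa
    have h3 : ((m * (m - 1) : ℕ) : ℚ) = (m : ℚ) * ((m : ℚ) - 1) := by
      rw [Nat.cast_mul, Nat.cast_sub (by omega : 1 ≤ m)]
      push_cast
      ring
    rw [← h3]
    exact_mod_cast congrArg (fun x : ℕ => (x : ℚ)) this
  constructor
  · intro S U g h hScard hUcard hg1 hh1 hSg1 hSg2 hUh1 hUh2 t ht
    have hN := Stmt13.lower_nat K s hs hsK S U g h hUcard hg1 hh1 hSg1 hSg2 hUh1 hUh2 t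
      (by omega)
    rw [← hm] at hN
    have hsummul : ∑ j ∈ Finset.range (m + 1 - 2), (j + 1) * s
        = (∑ j ∈ Finset.range (m - 1), (j + 1)) * s := by
      rw [show m + 1 - 2 = m - 1 by omega, Finset.sum_mul]
    rw [hsummul] at hN
    have hQ : ((m : ℚ) + 1) * K ≤ (∑ k : Fin K, (h t k : ℚ))
        + ((∑ j ∈ Finset.range (m - 1), (j + 1) : ℕ) : ℚ) * s := by
      exact_mod_cast hN
    have h5 : ((∑ j ∈ Finset.range (m - 1), (j + 1) : ℕ) : ℚ) * 2 * s
        = (m : ℚ) * ((m : ℚ) - 1) * s := by rw [hGaQ]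
    rw [ht'']
    push_cast
    linarith [hQ, h5]
  · refine ⟨fun t => Stmt13.Uset K s (t + 1), Stmt13.Uset K s, Stmt13.gfun K s,
      Stmt13.hfun K s, fun t _ => Stmt13.Uset_card K s hs (le_of_lt hsK) (t + 1),
      fun t _ => Stmt13.Uset_card K s hs (le_of_lt hsK) t,
      fun k => rfl, fun k => rfl, ?_, ?_, ?_, ?_, ?_⟩
    · intro t ht k hk
      obtain ⟨t', rfl⟩ : ∃ t', t = t' + 1 := ⟨t - 1, by omega⟩
      show Stmt13.gfun K s (t' + 2) k = 1
      have hk' : k ∈ Stmt13.Uset K s (t' + 2) := hk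
      simp only [Stmt13.gfun, if_pos hk']
    · intro t ht k hk
      obtain ⟨t', rfl⟩ : ∃ t', t = t' + 1 := ⟨t - 1, by omega⟩
      show Stmt13.gfun K s (t' + 2) k = Stmt13.gfun K s (t' + 1) k + 1
      have hk' : k ∉ Stmt13.Uset K s (t' + 2) := hk
      simp only [Stmt13.gfun, if_neg hk']
    · intro t ht k hk
      obtain ⟨t', rfl⟩ : ∃ t', t = t' + 1 := ⟨t - 1, by omega⟩
      show Stmt13.hfun K s (t' + 2) k = Stmt13.gfun K s (t' + 1) k + 1
      simp only [Stmt13.hfun, if_pos hk]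
    · intro t ht k hk
      obtain ⟨t', rfl⟩ : ∃ t', t = t' + 1 := ⟨t - 1, by omega⟩
      show Stmt13.hfun K s (t' + 2) k = Stmt13.hfun K s (t' + 1) k + 1
      simp only [Stmt13.hfun, if_neg hk]
    · intro t ht
      have hN := Stmt13.sum_hfun K s hs hsK t (by omega)
      rw [← hm] at hN
      have hjs : ∀ j, j < m → j * s ≤ K - 1 := by
        intro j hj
        have hm' : m = (K - 1) / s + 1 := by
          rw [hm, show K + s - 1 = (K - 1) + s by omega, Nat.add_div_right _ hs]
        have h1 : (K - 1) / s * s ≤ K - 1 := Nat.div_mul_le_self _ _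
        have h2 : j * s ≤ (K - 1) / s * s := Nat.mul_le_mul_right s (by omega)
        omega
      have hQ1 : ((∑ k : Fin K, Stmt13.hfun K s t k : ℕ) : ℚ)
          = (K : ℚ) + ∑ j ∈ Finset.range m, ((K : ℚ) - j * s) := by
        rw [hN]
        push_cast
        refine congrArg (fun x => (K : ℚ) + x) (Finset.sum_congr rfl (fun j hj => ?_))
        rw [Finset.mem_range] at hj
        rw [Nat.cast_sub (by have := hjs j hj; omega : j * s ≤ K)]
        push_cast
        ring
      have hQ2 : ∑ j ∈ Finset.range m, ((K : ℚ) - j * s)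
          = (m : ℚ) * K - (∑ j ∈ Finset.range m, (j : ℚ)) * s := by
        rw [Finset.sum_sub_distrib, Finset.sum_const, Finset.card_range]
        rw [Finset.sum_mul]
        push_cast
        ring
      have hQ3 : (∑ j ∈ Finset.range m, (j : ℚ)) * 2 = (m : ℚ) * ((m : ℚ) - 1) := by
        have h2 := Finset.sum_range_id_mul_two m
        have h4 : (((∑ j ∈ Finset.range m, j) * 2 : ℕ) : ℚ)
            = ((m * (m - 1) : ℕ) : ℚ) := by rw [h2]
        rw [Nat.cast_mul, Nat.cast_mul, Nat.cast_sub (by omega : 1 ≤ m)] at h4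
        push_cast at h4 ⊢
        linarith
      have hcast : (∑ k : Fin K, (Stmt13.hfun K s t k : ℚ))
          = ((∑ k : Fin K, Stmt13.hfun K s t k : ℕ) : ℚ) := by push_cast; rfl
      have hQ5 : (∑ j ∈ Finset.range m, (j : ℚ)) * 2 * s
          = (m : ℚ) * ((m : ℚ) - 1) * s := by rw [hQ3]
      rw [hcast, hQ1, hQ2, ht'']
      push_cast
      linarith [hQ5]
end

section
/- In the errorless relay AoI model with piecewise formula: for the greedy policy (round-robin sampling with S = U), for all t ≥ 1, Σ_{k=1}^K g_k(t) = tK − Σ_{τ=1}^{t−1} min{τS, K} and Σ_{k=1}^K h_k(t) = tK − Σ_{τ=1}^{t−1} min{(τ−1)U, K}. -/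
/-!
Greedy sampling keeps the level sets of the relay ages rigid: for `1 ≤ a ≤ t` exactly
`K - (a - 1) s` sensors have relay age at least `a` in slot `t`, because sampling the `s` oldest
sensors removes `s` of them from every level and moves every other sensor up one level.
Reading off the levels met by the sampled sensors gives `∑_{k ∈ S t} g_t(k) = min (t s) K`,
which is exactly how far the total relay age falls short of growing by `K`.
On the destination side, a destination can lag its relay only if its sensor was just sampled,
so at most `s` destinations lag; the greedy update refreshes all of them, hence
`h_{t+1} = g_t + 1` pointwise and `∑ h_{t+1} = ∑ g_t + K`. Both recursions telescope.
-/

open Finset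

section Greedy

variable {ι α : Type*} [Fintype ι] [LinearOrder α] {A : Finset ι} {f : ι → α}
  {p : ι → Prop} [DecidablePred p]

theorem greedy_filter_subset_or_subset (hA : ∀ k ∈ A, ∀ j ∉ A, f j ≤ f k)
    (hp : ∀ j k, p j → f j ≤ f k → p k) :
    univ.filter p ⊆ A ∨ A ⊆ univ.filter p := by
  by_cases hsub : univ.filter p ⊆ A
  · exact .inl hsub
  · obtain ⟨j, hj, hjA⟩ := not_subset.mp hsub
    exact .inr fun k hk => by
      simpa using hp j k (mem_filter.mp hj).2 (hA k hk j hjA)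

theorem card_filter_greedy_eq_min (hA : ∀ k ∈ A, ∀ j ∉ A, f j ≤ f k)
    (hp : ∀ j k, p j → f j ≤ f k → p k) : #(A.filter p) = min #{k | p k} #A := by
  classical
  have hinter : A.filter p = univ.filter p ∩ A := by ext; simp [and_comm]
  rcases greedy_filter_subset_or_subset hA hp with hsub | hsub
  · rw [hinter, inter_eq_left.mpr hsub, min_eq_left (card_le_card hsub)]
  · rw [hinter, inter_eq_right.mpr hsub, min_eq_right (card_le_card hsub)]

theorem greedy_filter_subset_of_card_le (hA : ∀ k ∈ A, ∀ j ∉ A, f j ≤ f k)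
    (hp : ∀ j k, p j → f j ≤ f k → p k) (hcard : #{k | p k} ≤ #A) :
    univ.filter p ⊆ A :=
  (greedy_filter_subset_or_subset hA hp).elim id
    fun hsub => (eq_of_subset_of_card_le hsub hcard).ge

end Greedy

theorem sum_eq_sum_Icc_card_filter_le {ι : Type*} (A : Finset ι) (f : ι → ℕ) {T : ℕ}
    (hf : ∀ k ∈ A, f k ≤ T) : ∑ k ∈ A, f k = ∑ a ∈ Icc 1 T, #{k ∈ A | a ≤ f k} := by
  simp_rw [card_filter]
  rw [sum_comm]
  refine sum_congr rfl fun k hk => ?_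
  have hIcc : {a ∈ Icc 1 T | a ≤ f k} = Icc 1 (f k) := by
    ext a
    simp only [mem_filter, mem_Icc]
    have := hf k hk
    omega
  rw [← card_filter, hIcc, Nat.card_Icc, Nat.add_sub_cancel]

theorem sum_Icc_min_sub_mul (K s t : ℕ) :
    ∑ a ∈ Icc 1 t, min (K - (a - 1) * s) s = min (t * s) K := by
  induction t with
  | zero => simp
  | succ t ih =>
    rw [sum_Icc_succ_top (by omega), ih, Nat.add_sub_cancel, Nat.succ_mul]
    omega

theorem eq_mul_sub_sum_Icc_of_succ {G c : ℕ → ℤ} {K : ℤ} (h1 : G 1 = K)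
    (hsucc : ∀ t, 1 ≤ t → G (t + 1) = G t + K - c t) {t : ℕ} (ht : 1 ≤ t) :
    G t = t * K - ∑ τ ∈ Icc 1 (t - 1), c τ := by
  induction t, ht using Nat.le_induction with
  | base => simp [h1]
  | succ t ht ih =>
    obtain ⟨m, rfl⟩ : ∃ m, t = m + 1 := ⟨t - 1, by omega⟩
    rw [hsucc _ ht, ih, Nat.add_sub_cancel, Nat.add_sub_cancel,
      sum_Icc_succ_top (by omega)]
    push_cast
    ring

/-- Trajectory of the greedy policy: `g` are the ages at the relay, `h` at the destinations,
`S t` the sensors sampled and `U t` the destinations updated in slot `t`. -/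
structure IsGreedyTrajectory {ι : Type*} (s : ℕ) (S U : ℕ → Finset ι) (g h : ℕ → ι → ℕ) :
    Prop where
  g_one : ∀ k, g 1 k = 1
  h_one : ∀ k, h 1 k = 1
  g_succ_of_mem : ∀ t, 1 ≤ t → ∀ k ∈ S t, g (t + 1) k = 1
  g_succ_of_notMem : ∀ t, 1 ≤ t → ∀ k ∉ S t, g (t + 1) k = g t k + 1
  h_succ_of_mem : ∀ t, 1 ≤ t → ∀ k ∈ U t, h (t + 1) k = g t k + 1
  h_succ_of_notMem : ∀ t, 1 ≤ t → ∀ k ∉ U t, h (t + 1) k = h t k + 1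
  card_sample : ∀ t, 1 ≤ t → #(S t) = s
  sample_greedy : ∀ t, 1 ≤ t → ∀ k ∈ S t, ∀ j ∉ S t, g t j ≤ g t k
  card_update : ∀ t, 1 ≤ t → #(U t) = s
  update_greedy : ∀ t, 1 ≤ t → ∀ k ∈ U t, ∀ j ∉ U t, (h t j : ℤ) - g t j ≤ (h t k : ℤ) - g t k

namespace IsGreedyTrajectory

variable {ι : Type*} {s : ℕ} {S U : ℕ → Finset ι} {g h : ℕ → ι → ℕ} {t : ℕ}

theorem one_le_age (hσ : IsGreedyTrajectory s S U g h) (ht : 1 ≤ t) (k : ι) : 1 ≤ g t k := by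
  induction t, ht using Nat.le_induction with
  | base => rw [hσ.g_one]
  | succ t ht ih =>
    by_cases hk : k ∈ S t
    · rw [hσ.g_succ_of_mem t ht k hk]
    · rw [hσ.g_succ_of_notMem t ht k hk]; omega

theorem age_le (hσ : IsGreedyTrajectory s S U g h) (ht : 1 ≤ t) (k : ι) : g t k ≤ t := by
  induction t, ht using Nat.le_induction with
  | base => rw [hσ.g_one]
  | succ t ht ih =>
    by_cases hk : k ∈ S t
    · rw [hσ.g_succ_of_mem t ht k hk]; omega
    · rw [hσ.g_succ_of_notMem t ht k hk]; omega

variable [Fintype ι]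

theorem card_le_age_succ (hσ : IsGreedyTrajectory s S U g h) (ht : 1 ≤ t) {a : ℕ}
    (ha : 1 ≤ a) : #{k | a + 1 ≤ g (t + 1) k} = #{k | a ≤ g t k} - s := by
  classical
  have hsdiff : univ.filter (a + 1 ≤ g (t + 1) ·) = univ.filter (a ≤ g t ·) \ S t := by
    ext k
    by_cases hk : k ∈ S t
    · simp [hk, hσ.g_succ_of_mem t ht k hk]; omega
    · simp [hk, hσ.g_succ_of_notMem t ht k hk]
  have hsampled : #(S t ∩ univ.filter (a ≤ g t ·)) = min #{k | a ≤ g t k} s := by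
    rw [inter_filter, inter_univ, ← hσ.card_sample t ht]
    exact card_filter_greedy_eq_min (hσ.sample_greedy t ht) fun _ _ => le_trans
  rw [hsdiff, card_sdiff, hsampled]
  omega

theorem card_le_age (hσ : IsGreedyTrajectory s S U g h) (ht : 1 ≤ t) {a : ℕ} (ha : 1 ≤ a)
    (hat : a ≤ t) : #{k | a ≤ g t k} = Fintype.card ι - (a - 1) * s := by
  induction t, ht using Nat.le_induction generalizing a with
  | base => simp [show a = 1 by omega, hσ.g_one]
  | succ t ht ih =>
    rcases Nat.lt_or_ge a 2 with ha2 | ha2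
    · simp [show a = 1 by omega, hσ.one_le_age (Nat.le_succ_of_le ht)]
    · obtain ⟨b, rfl⟩ : ∃ b, a = b + 1 := ⟨a - 1, by omega⟩
      rw [hσ.card_le_age_succ ht (by omega), ih (by omega) (by omega), Nat.add_sub_cancel,
        Nat.sub_sub, ← Nat.succ_mul, Nat.succ_eq_add_one, Nat.sub_add_cancel (by omega)]

theorem sum_sampled_age (hσ : IsGreedyTrajectory s S U g h) (ht : 1 ≤ t) :
    ∑ k ∈ S t, g t k = min (t * s) (Fintype.card ι) := by
  rw [sum_eq_sum_Icc_card_filter_le (S t) (g t) fun k _ => hσ.age_le ht k,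
    ← sum_Icc_min_sub_mul _ _ t]
  refine sum_congr rfl fun a ha => ?_
  obtain ⟨ha1, hat⟩ := mem_Icc.mp ha
  rw [card_filter_greedy_eq_min (hσ.sample_greedy t ht) fun _ _ => le_trans,
    hσ.card_le_age ht ha1 hat, hσ.card_sample t ht]

theorem sum_age_succ (hσ : IsGreedyTrajectory s S U g h) (ht : 1 ≤ t) :
    ∑ k, (g (t + 1) k : ℤ) =
      ∑ k, (g t k : ℤ) + Fintype.card ι - ((min (t * s) (Fintype.card ι) : ℕ) : ℤ) := by
  classical
  have hpoint : ∀ k, g (t + 1) k + (if k ∈ S t then g t k else 0) = g t k + 1 := by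
    intro k
    by_cases hk : k ∈ S t
    · simp [hk, hσ.g_succ_of_mem t ht k hk, add_comm]
    · simp [hk, hσ.g_succ_of_notMem t ht k hk]
  have hsum : ∑ k, g (t + 1) k + ∑ k ∈ S t, g t k = ∑ k, g t k + Fintype.card ι := by
    rw [← univ_inter (S t), ← sum_ite_mem, ← sum_add_distrib, sum_congr rfl fun k _ => hpoint k,
      sum_add_distrib, sum_const, card_univ, smul_eq_mul, mul_one]
  rw [hσ.sum_sampled_age ht] at hsum
  have := congrArg (Nat.cast : ℕ → ℤ) hsum
  push_cast at this ⊢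
  linarith

theorem destAge_succ_of_gap (hσ : IsGreedyTrajectory s S U g h) (ht : 1 ≤ t)
    (hle : ∀ k, g t k ≤ h t k) (hcard : #{k | g t k < h t k} ≤ s) (k : ι) :
    h (t + 1) k = g t k + 1 := by
  by_cases hk : k ∈ U t
  · exact hσ.h_succ_of_mem t ht k hk
  · have hcover : univ.filter (fun k => g t k < h t k) ⊆ U t :=
      greedy_filter_subset_of_card_le (hσ.update_greedy t ht) (fun j k _ _ => by omega)
        (hσ.card_update t ht ▸ hcard)
    have hgap : h t k = g t k := by
      by_contra hne
      exact hk (hcover (by simp only [mem_filter, mem_univ, true_and]; have := hle k; omega))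
    rw [hσ.h_succ_of_notMem t ht k hk, hgap]

theorem age_le_destAge_and_card_lt_le (hσ : IsGreedyTrajectory s S U g h) (ht : 1 ≤ t) :
    (∀ k, g t k ≤ h t k) ∧ #{k | g t k < h t k} ≤ s := by
  induction t, ht using Nat.le_induction with
  | base => simp [hσ.g_one, hσ.h_one]
  | succ t ht ih =>
    have hdest := hσ.destAge_succ_of_gap ht ih.1 ih.2
    refine ⟨fun k => ?_, ?_⟩
    · by_cases hk : k ∈ S t
      · rw [hdest, hσ.g_succ_of_mem t ht k hk]; omega
      · rw [hdest, hσ.g_succ_of_notMem t ht k hk]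
    · calc #{k | g (t + 1) k < h (t + 1) k} ≤ #(S t) := card_le_card fun k hk => by
            by_contra hkS
            simp [hdest, hσ.g_succ_of_notMem t ht k hkS] at hk
        _ = s := hσ.card_sample t ht

theorem destAge_succ (hσ : IsGreedyTrajectory s S U g h) (ht : 1 ≤ t) (k : ι) :
    h (t + 1) k = g t k + 1 :=
  hσ.destAge_succ_of_gap ht (hσ.age_le_destAge_and_card_lt_le ht).1
    (hσ.age_le_destAge_and_card_lt_le ht).2 k

theorem sum_destAge_succ (hσ : IsGreedyTrajectory s S U g h) (ht : 1 ≤ t) :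
    ∑ k, (h (t + 1) k : ℤ) =
      ∑ k, (h t k : ℤ) + Fintype.card ι - ((min ((t - 1) * s) (Fintype.card ι) : ℕ) : ℤ) := by
  have hsum : ∀ t, 1 ≤ t → ∑ k, (h (t + 1) k : ℤ) = ∑ k, (g t k : ℤ) + Fintype.card ι := by
    intro t ht
    simp [hσ.destAge_succ ht, sum_add_distrib]
  rcases Nat.lt_or_ge t 2 with ht2 | ht2
  · obtain rfl : t = 1 := by omega
    simp [hsum 1 le_rfl, hσ.g_one, hσ.h_one]
  · obtain ⟨m, rfl⟩ : ∃ m, t = m + 1 := ⟨t - 1, by omega⟩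
    rw [hsum _ ht, hsum m (by omega), hσ.sum_age_succ (by omega), Nat.add_sub_cancel]
    ring

end IsGreedyTrajectory

theorem stmt14_general (K s : ℕ)
    (S U : ℕ → Finset (Fin K)) (g h : ℕ → Fin K → ℕ)
    (hg1 : ∀ k, g 1 k = 1) (hh1 : ∀ k, h 1 k = 1)
    (hgS : ∀ t, 1 ≤ t → ∀ k ∈ S t, g (t + 1) k = 1)
    (hgN : ∀ t, 1 ≤ t → ∀ k ∉ S t, g (t + 1) k = g t k + 1)
    (hhU : ∀ t, 1 ≤ t → ∀ k ∈ U t, h (t + 1) k = g t k + 1)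
    (hhN : ∀ t, 1 ≤ t → ∀ k ∉ U t, h (t + 1) k = h t k + 1)
    (hSgreedy : ∀ t, 1 ≤ t → (S t).card = s ∧
      ∀ k ∈ S t, ∀ j ∉ S t, g t j ≤ g t k)
    (hUgreedy : ∀ t, 1 ≤ t → (U t).card = s ∧
      ∀ k ∈ U t, ∀ j ∉ U t, (h t j : ℤ) - g t j ≤ (h t k : ℤ) - g t k) :
    ∀ t, 1 ≤ t →
      ((∑ k : Fin K, (g t k : ℤ)) =
        (t : ℤ) * K - ∑ τ ∈ Finset.Icc 1 (t - 1), ((min (τ * s) K : ℕ) : ℤ)) ∧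
      ((∑ k : Fin K, (h t k : ℤ)) =
        (t : ℤ) * K - ∑ τ ∈ Finset.Icc 1 (t - 1), ((min ((τ - 1) * s) K : ℕ) : ℤ)) := by
  have hσ : IsGreedyTrajectory s S U g h :=
    { g_one := hg1, h_one := hh1, g_succ_of_mem := hgS, g_succ_of_notMem := hgN,
      h_succ_of_mem := hhU, h_succ_of_notMem := hhN,
      card_sample := fun t ht => (hSgreedy t ht).1, sample_greedy := fun t ht => (hSgreedy t ht).2,
      card_update := fun t ht => (hUgreedy t ht).1, update_greedy := fun t ht => (hUgreedy t ht).2 }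
  intro t ht
  constructor
  · refine eq_mul_sub_sum_Icc_of_succ (G := fun t => ∑ k, (g t k : ℤ)) ?_ (fun t ht => ?_) ht
    · simp [hg1]
    · simpa using hσ.sum_age_succ ht
  · refine eq_mul_sub_sum_Icc_of_succ (G := fun t => ∑ k, (h t k : ℤ)) ?_ (fun t ht => ?_) ht
    · simp [hh1]
    · simpa using hσ.sum_destAge_succ ht

/-- For the greedy policy (sample the `s` sensors with largest relay age, update the `s`
destinations with largest gap `h − g`), the sums of ages satisfy the piecewise formulas
`Σ_k g_k(t) = tK − Σ_{τ=1}^{t−1} min{τs, K}` and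
`Σ_k h_k(t) = tK − Σ_{τ=1}^{t−1} min{(τ−1)s, K}`. -/
theorem stmt14 (K s : ℕ) (hs : 1 ≤ s) (hsK : s < K)
    (S U : ℕ → Finset (Fin K)) (g h : ℕ → Fin K → ℕ)
    (hg1 : ∀ k, g 1 k = 1) (hh1 : ∀ k, h 1 k = 1)
    (hgS : ∀ t, 1 ≤ t → ∀ k ∈ S t, g (t + 1) k = 1)
    (hgN : ∀ t, 1 ≤ t → ∀ k ∉ S t, g (t + 1) k = g t k + 1)
    (hhU : ∀ t, 1 ≤ t → ∀ k ∈ U t, h (t + 1) k = g t k + 1)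
    (hhN : ∀ t, 1 ≤ t → ∀ k ∉ U t, h (t + 1) k = h t k + 1)
    (hSgreedy : ∀ t, 1 ≤ t → (S t).card = s ∧
      ∀ k ∈ S t, ∀ j ∉ S t, g t j ≤ g t k)
    (hUgreedy : ∀ t, 1 ≤ t → (U t).card = s ∧
      ∀ k ∈ U t, ∀ j ∉ U t, (h t j : ℤ) - g t j ≤ (h t k : ℤ) - g t k) :
    ∀ t, 1 ≤ t →
      ((∑ k : Fin K, (g t k : ℤ)) =
        (t : ℤ) * K - ∑ τ ∈ Finset.Icc 1 (t - 1), ((min (τ * s) K : ℕ) : ℤ)) ∧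
      ((∑ k : Fin K, (h t k : ℤ)) =
        (t : ℤ) * K - ∑ τ ∈ Finset.Icc 1 (t - 1), ((min ((τ - 1) * s) K : ℕ) : ℤ)) :=
  stmt14_general K s S U g h hg1 hh1 hgS hgN hhU hhN hSgreedy hUgreedy
end

section
/- In the errorless relay AoI model, for every policy and all t ≥ 1, the pointwise gap identity holds: Σ_{k=1}^K (h_k(t+1) − g_k(t) − 1) = Σ_{τ=1}^{t−1} R_S(τ) − Σ_{τ=1}^{t} R_U(τ), and this quantity is nonnegative. -/
/-- Pointwise gap identity: `Σ_k (h_k(t+1) − g_k(t) − 1) = Σ_{τ=1}^{t−1} R_S(τ) −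
Σ_{τ=1}^{t} R_U(τ)`, and this quantity is nonnegative. -/
theorem stmt19 (K : ℕ) (S U : ℕ → Finset (Fin K)) (g h : ℕ → Fin K → ℕ)
    (hg1 : ∀ k, g 1 k = 1) (hh1 : ∀ k, h 1 k = 1)
    (hgS : ∀ t, 1 ≤ t → ∀ k ∈ S t, g (t + 1) k = 1)
    (hgN : ∀ t, 1 ≤ t → ∀ k ∉ S t, g (t + 1) k = g t k + 1)
    (hhU : ∀ t, 1 ≤ t → ∀ k ∈ U t, h (t + 1) k = g t k + 1)
    (hhN : ∀ t, 1 ≤ t → ∀ k ∉ U t, h (t + 1) k = h t k + 1) :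
    ∀ t, 1 ≤ t →
      ((∑ k : Fin K, ((h (t + 1) k : ℤ) - g t k - 1)) =
        (∑ τ ∈ Finset.Icc 1 (t - 1), ∑ k ∈ S τ, (g τ k : ℤ)) -
          ∑ τ ∈ Finset.Icc 1 t, ∑ k ∈ U τ, ((h τ k : ℤ) - g τ k)) ∧
      0 ≤ ∑ k : Fin K, ((h (t + 1) k : ℤ) - g t k - 1) := by
  have haux : ∀ t, 1 ≤ t → ∀ k, g t k + 1 ≤ h (t + 1) k := by
    intro t ht
    induction t, ht using Nat.le_induction with
    | base =>
      intro k
      by_cases hk : k ∈ U 1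
      · rw [hhU 1 le_rfl k hk]
      · rw [hhN 1 le_rfl k hk, hg1, hh1]
    | succ t ht ih =>
      intro k
      by_cases hk : k ∈ U (t + 1)
      · rw [hhU (t + 1) (by omega) k hk]
      · rw [hhN (t + 1) (by omega) k hk]
        have h1 := ih k
        by_cases hs : k ∈ S t
        · have := hgS t ht k hs
          omega
        · have := hgN t ht k hs
          omega
  intro t ht
  induction t, ht using Nat.le_induction with
  | base =>
    constructor
    · have h2 : ∀ k : Fin K, h 2 k = 2 := by
        intro k
        by_cases hk : k ∈ U 1
        · rw [hhU 1 le_rfl k hk, hg1]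
        · rw [hhN 1 le_rfl k hk, hh1]
      simp [h2, hg1, hh1]
    · refine Finset.sum_nonneg fun k _ => ?_
      have := haux 1 le_rfl k
      norm_num at this ⊢
      omega
  | succ t ht ih =>
    obtain ⟨s, rfl⟩ : ∃ s, t = s + 1 := ⟨t - 1, by omega⟩
    obtain ⟨hid, _⟩ := ih
    have key : (∑ k : Fin K, ((h (s + 1 + 1 + 1) k : ℤ) - g (s + 1 + 1) k - 1)) =
        (∑ k : Fin K, ((h (s + 1 + 1) k : ℤ) - g (s + 1) k - 1)) +
          ((∑ k ∈ S (s + 1), (g (s + 1) k : ℤ)) -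
          ∑ k ∈ U (s + 1 + 1), ((h (s + 1 + 1) k : ℤ) - g (s + 1 + 1) k)) := by
      have hsum : ∀ k : Fin K, ((h (s + 1 + 1 + 1) k : ℤ) - g (s + 1 + 1) k - 1) =
          ((h (s + 1 + 1) k : ℤ) - g (s + 1) k - 1) +
            ((if k ∈ S (s + 1) then (g (s + 1) k : ℤ) else 0) -
             (if k ∈ U (s + 1 + 1) then ((h (s + 1 + 1) k : ℤ) - g (s + 1 + 1) k) else 0)) := by
        intro k
        have e1 : (h (s + 1 + 1 + 1) k : ℤ) =
            if k ∈ U (s + 1 + 1) then (g (s + 1 + 1) k : ℤ) + 1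
            else (h (s + 1 + 1) k : ℤ) + 1 := by
          by_cases hk : k ∈ U (s + 1 + 1)
          · rw [if_pos hk, hhU (s + 1 + 1) (by omega) k hk]; push_cast; ring
          · rw [if_neg hk, hhN (s + 1 + 1) (by omega) k hk]; push_cast; ring
        have e2 : (g (s + 1 + 1) k : ℤ) =
            if k ∈ S (s + 1) then 1 else (g (s + 1) k : ℤ) + 1 := by
          by_cases hs' : k ∈ S (s + 1)
          · rw [if_pos hs', hgS (s + 1) (by omega) k hs']; norm_num
          · rw [if_neg hs', hgN (s + 1) (by omega) k hs']; push_cast; ring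
        rw [e1, e2]
        split_ifs <;> ring
      rw [Finset.sum_congr rfl (fun k _ => hsum k), Finset.sum_add_distrib]
      congr 1
      rw [Finset.sum_sub_distrib, Finset.sum_ite_mem, Finset.sum_ite_mem,
        Finset.univ_inter, Finset.univ_inter]
    constructor
    · rw [key, hid]
      have eS : (∑ τ ∈ Finset.Icc 1 (s + 1 + 1 - 1), ∑ k ∈ S τ, (g τ k : ℤ)) =
          (∑ τ ∈ Finset.Icc 1 (s + 1 - 1), ∑ k ∈ S τ, (g τ k : ℤ)) +
            ∑ k ∈ S (s + 1), (g (s + 1) k : ℤ) := by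
        simp only [Nat.add_sub_cancel]
        exact Finset.sum_Icc_succ_top (by omega) _
      have eU : (∑ τ ∈ Finset.Icc 1 (s + 1 + 1), ∑ k ∈ U τ, ((h τ k : ℤ) - g τ k)) =
          (∑ τ ∈ Finset.Icc 1 (s + 1), ∑ k ∈ U τ, ((h τ k : ℤ) - g τ k)) +
            ∑ k ∈ U (s + 1 + 1), ((h (s + 1 + 1) k : ℤ) - g (s + 1 + 1) k) :=
        Finset.sum_Icc_succ_top (by omega) _
      rw [eS, eU]
      ring
    · refine Finset.sum_nonneg fun k _ => ?_
      have := haux (s + 1 + 1) (by omega) k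
      omega
end
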